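/- arXiv:2512.16087 — 5 statements merged into one kernel-verified Lean document; each statement's English description precedes it below -/
import Mathlib

section
/- Let U ⊆ V with t ∉ U, and let s ∈ V. Write π(s,t) = π(s,U,t) + π(s,Ū,t), where π(s,U,t) is the probability an α-discounted walk from s visits some vertex of U before terminating at t, and π(s,Ū,t) the probability it terminates at t without visiting U. If μ maximizes π(v,Ū,t) over v in the out-neighborhood of U minus U, then π(s,U,t) ≤ π(μ,Ū,t)/α. -/
open Finset

/-- The probability of following a given walk (product over steps of (1-α)/d_out). -/
noncomputable def stepP {V : Type*} [DecidableEq V] (out : V → Finset V) (α : ℝ) :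
    List V → ℝ
  | [] => 0
  | [_] => 1
  | a :: b :: l => (if b ∈ out a then (1 - α) / (out a).card else 0) * stepP out α (b :: l)

open Classical in
/-- The probability that an α-discounted random walk from s terminates at t while following
a walk satisfying the predicate P. -/
noncomputable def pprVia {V : Type*} [DecidableEq V] (out : V → Finset V) (α : ℝ)
    (P : List V → Prop) (s t : V) : ℝ :=
  α * ∑' w : List V,
    if w.head? = some s ∧ w.getLast? = some t ∧ P w then stepP out α w else 0

namespace Stmt8Aux

variable {V : Type*} [DecidableEq V]

lemma stepP_nonneg (out : V → Finset V) {α : ℝ} (hα1 : α ≤ 1) :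
    ∀ w : List V, 0 ≤ stepP out α w
  | [] => by simp [stepP]
  | [_] => by simp [stepP]
  | a :: b :: l => by
      simp only [stepP]
      refine mul_nonneg ?_ (stepP_nonneg out hα1 (b :: l))
      split
      · exact div_nonneg (by linarith) (Nat.cast_nonneg _)
      · exact le_refl 0

/-- single-step weight in `ℝ≥0∞`. -/
noncomputable def stepE (out : V → Finset V) (α : ℝ) (a b : V) : ENNReal :=
  if b ∈ out a then ENNReal.ofReal ((1 - α) / (out a).card) else 0

lemma ofReal_stepP_cons (out : V → Finset V) {α : ℝ} (hα1 : α ≤ 1) (a b : V) (l : List V) :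
    ENNReal.ofReal (stepP out α (a :: b :: l)) =
      stepE out α a b * ENNReal.ofReal (stepP out α (b :: l)) := by
  simp only [stepP, stepE]
  split
  · rw [ENNReal.ofReal_mul (div_nonneg (by linarith) (Nat.cast_nonneg _))]
  · simp

open Classical in
/-- The `ℝ≥0∞` weight of a walk, restricted to walks satisfying `P`. -/
noncomputable def wt (out : V → Finset V) (α : ℝ) (P : List V → Prop) (w : List V) : ENNReal :=
  if P w then ENNReal.ofReal (stepP out α w) else 0

lemma wt_zero {out : V → Finset V} {α : ℝ} {P : List V → Prop} {w : List V} (h : ¬ P w) :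
    wt out α P w = 0 := by
  unfold wt; exact if_neg h

lemma wt_le {out : V → Finset V} {α : ℝ} {P Q : List V → Prop} {w : List V}
    (h : P w → Q w) : wt out α P w ≤ wt out α Q w := by
  unfold wt
  by_cases h1 : P w
  · rw [if_pos h1, if_pos (h h1)]
  · rw [if_neg h1]; exact zero_le

lemma wt_congr {out : V → Finset V} {α : ℝ} {P Q : List V → Prop} {w : List V}
    (h : P w ↔ Q w) : wt out α P w = wt out α Q w :=
  le_antisymm (wt_le h.mp) (wt_le h.mpr)

lemma wt_le_add {out : V → Finset V} {α : ℝ} {P Q R : List V → Prop} {w : List V}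
    (h : P w → Q w ∨ R w) : wt out α P w ≤ wt out α Q w + wt out α R w := by
  unfold wt
  by_cases h1 : P w
  · rw [if_pos h1]
    rcases h h1 with h2 | h2
    · rw [if_pos h2]; exact self_le_add_right _ _
    · rw [if_pos h2]; exact self_le_add_left _ _
  · rw [if_neg h1]; exact zero_le

lemma wt_ne_top {out : V → Finset V} {α : ℝ} {P : List V → Prop} {w : List V} :
    wt out α P w ≠ ⊤ := by
  unfold wt; split
  · exact ENNReal.ofReal_ne_top
  · simp

lemma wt_single {out : V → Finset V} {α : ℝ} {P : List V → Prop} {s : V} (h : P [s]) :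
    wt out α P [s] = 1 := by
  unfold wt; rw [if_pos h]; simp [stepP]

lemma wt_cons (out : V → Finset V) {α : ℝ} (hα1 : α ≤ 1) (P : List V → Prop)
    (a b : V) (l : List V) :
    wt out α P (a :: b :: l) = stepE out α a b * wt out α (fun w => P (a :: w)) (b :: l) := by
  unfold wt
  by_cases h : P (a :: b :: l)
  · rw [if_pos h, if_pos h, ofReal_stepP_cons out hα1]
  · rw [if_neg h, if_neg h, mul_zero]

lemma tsum_cons (F : List V → ENNReal) :
    ∑' w : List V, F w = F [] + ∑' p : V × List V, F (p.1 :: p.2) := by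
  have h1 : ∀ w : List V, F w = (if w = [] then F w else 0) + (if w = [] then 0 else F w) := by
    intro w; split <;> simp
  rw [tsum_congr h1, ENNReal.tsum_add]
  congr 1
  · rw [tsum_eq_single ([] : List V) (fun w hw => if_neg hw), if_pos rfl]
  · have hinj : Function.Injective (fun p : V × List V => p.1 :: p.2) := by
      intro p q h
      simp only [List.cons.injEq] at h
      exact Prod.ext h.1 h.2
    have hsupp : Function.support (fun w : List V => if w = [] then 0 else F w) ⊆
        Set.range (fun p : V × List V => p.1 :: p.2) := by
      intro w hw
      cases w with
      | nil => simp at hw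
      | cons a l => exact ⟨(a, l), rfl⟩
    rw [← hinj.tsum_eq hsupp]
    exact tsum_congr fun p => by simp

lemma tsum_head (s : V) (F : List V → ENNReal) (hF : ∀ w, w.head? ≠ some s → F w = 0) :
    ∑' w : List V, F w = ∑' l : List V, F (s :: l) := by
  rw [tsum_cons, hF [] (by simp), zero_add, ENNReal.tsum_prod']
  rw [tsum_eq_single s]
  intro a ha
  have : ∀ l : List V, F (a :: l) = 0 := fun l => hF _ (by simpa using ha)
  simp [this]

lemma tsum_wt_head {out : V → Finset V} {α : ℝ} (s : V) (Q : List V → Prop)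
    (hQ : ∀ w, Q w → w.head? = some s) :
    ∑' w : List V, wt out α Q w = ∑' l : List V, wt out α Q (s :: l) :=
  tsum_head s _ fun w hw => wt_zero fun h => hw (hQ w h)

/-- sum over walks from s satisfying P, with length bound. -/
noncomputable def bS (out : V → Finset V) (α : ℝ) (P : List V → Prop) (s : V) (n : ℕ) :
    ENNReal :=
  ∑' w : List V, wt out α (fun w => w.head? = some s ∧ P w ∧ w.length ≤ n) w

/-- sum over walks from s satisfying P. -/
noncomputable def fS (out : V → Finset V) (α : ℝ) (P : List V → Prop) (s : V) : ENNReal :=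
  ∑' w : List V, wt out α (fun w => w.head? = some s ∧ P w) w

lemma fS_le_of_bS_le (out : V → Finset V) (α : ℝ) (P : List V → Prop) (s : V) (C : ENNReal)
    (h : ∀ n, bS out α P s n ≤ C) : fS out α P s ≤ C := by
  rw [fS, ENNReal.tsum_eq_iSup_sum]
  refine iSup_le fun F => ?_
  set n := F.sup List.length with hn
  calc ∑ w ∈ F, wt out α (fun w => w.head? = some s ∧ P w) w
      ≤ ∑ w ∈ F, wt out α (fun w => w.head? = some s ∧ P w ∧ w.length ≤ n) w :=
        Finset.sum_le_sum fun w hw => wt_le fun hc => ⟨hc.1, hc.2, Finset.le_sup hw⟩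
    _ ≤ bS out α P s n := ENNReal.sum_le_tsum F
    _ ≤ C := h n

lemma bS_zero (out : V → Finset V) (α : ℝ) (P : List V → Prop) (s : V) :
    bS out α P s 0 = 0 := by
  rw [bS]
  refine (tsum_congr fun w => wt_zero ?_).trans tsum_zero
  rintro ⟨h1, -, h3⟩
  rw [Nat.le_zero, List.length_eq_zero_iff] at h3
  subst h3
  simp at h1

lemma bS_succ (out : V → Finset V) {α : ℝ} (hα1 : α ≤ 1) (P : List V → Prop) (s : V) (n : ℕ) :
    bS out α P s (n + 1)
      = wt out α P [s]
        + ∑' b : V, stepE out α s b *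
            ∑' l : List V, wt out α (fun w => P (s :: w) ∧ w.length ≤ n) (b :: l) := by
  rw [bS, tsum_wt_head s _ (fun w h => h.1),
    tsum_cons (fun l => wt out α (fun w => w.head? = some s ∧ P w ∧ w.length ≤ n + 1) (s :: l))]
  congr 1
  · exact wt_congr (by simp)
  · rw [ENNReal.tsum_prod']
    refine tsum_congr fun b => ?_
    rw [← ENNReal.tsum_mul_left]
    refine tsum_congr fun l => ?_
    rw [wt_cons out hα1]
    exact congrArg _ (wt_congr (by simp [Nat.succ_le_succ_iff]))

lemma tsum_stepE (out : V → Finset V) [Fintype V] {α : ℝ} (hα1 : α ≤ 1) (s : V) :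
    ∑' b : V, stepE out α s b ≤ ENNReal.ofReal (1 - α) := by
  rw [tsum_fintype]
  simp only [stepE]
  rw [Finset.sum_ite_mem, Finset.univ_inter, Finset.sum_const, nsmul_eq_mul]
  rcases Nat.eq_zero_or_pos (out s).card with h | h
  · simp [h]
  · have hcard : (0:ℝ) < (out s).card := by exact_mod_cast h
    rw [← ENNReal.ofReal_natCast, ← ENNReal.ofReal_mul (Nat.cast_nonneg _)]
    apply ENNReal.ofReal_le_ofReal
    rw [mul_div_cancel₀ _ (ne_of_gt hcard)]

lemma bS_total (out : V → Finset V) [Fintype V] {α : ℝ} (hα0 : 0 < α) (hα1 : α < 1) :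
    ∀ n (s : V), bS out α (fun _ => True) s n ≤ ENNReal.ofReal α⁻¹ := by
  intro n
  induction n with
  | zero => intro s; rw [bS_zero]; exact zero_le
  | succ n ih =>
    intro s
    rw [bS_succ out hα1.le]
    have h0 : wt out α (fun _ => True) ([s] : List V) = 1 := wt_single trivial
    rw [h0]
    have h1 : ∀ b : V,
        (∑' l : List V, wt out α
            (fun w => (fun _ : List V => True) (s :: w) ∧ w.length ≤ n) (b :: l))
          = bS out α (fun _ => True) b n := by
      intro b
      rw [bS, tsum_wt_head b
        (fun w => w.head? = some b ∧ (fun _ : List V => True) w ∧ w.length ≤ n)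
        (fun w h => h.1)]
      exact tsum_congr fun l => wt_congr (by simp)
    have h2 : (∑' b : V, stepE out α s b *
        ∑' l : List V, wt out α
          (fun w => (fun _ : List V => True) (s :: w) ∧ w.length ≤ n) (b :: l))
        = ∑' b : V, stepE out α s b * bS out α (fun _ => True) b n :=
      tsum_congr fun b => by rw [h1 b]
    rw [h2]
    refine le_trans (add_le_add_right
      (ENNReal.tsum_le_tsum fun b => mul_le_mul_right (ih b) _) 1) ?_
    rw [ENNReal.tsum_mul_right]
    refine le_trans (add_le_add_right
      (mul_le_mul_left (tsum_stepE out hα1.le s) _) 1) ?_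
    rw [← ENNReal.ofReal_one, ← ENNReal.ofReal_mul (by linarith),
      ← ENNReal.ofReal_add one_pos.le (by nlinarith [inv_nonneg.mpr hα0.le])]
    apply ENNReal.ofReal_le_ofReal
    have h := mul_inv_cancel₀ (ne_of_gt hα0)
    nlinarith [h]

lemma fS_le_total (out : V → Finset V) [Fintype V] {α : ℝ} (hα0 : 0 < α) (hα1 : α < 1)
    (P : List V → Prop) (s : V) : fS out α P s ≤ ENNReal.ofReal α⁻¹ := by
  have h1 : fS out α P s ≤ fS out α (fun _ => True) s := by
    rw [fS, fS]
    exact ENNReal.tsum_le_tsum fun w => wt_le fun hc => ⟨hc.1, trivial⟩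
  exact h1.trans (fS_le_of_bS_le out α _ s _ (fun n => bS_total out hα0 hα1 n s))

lemma arith_step {α : ℝ} (hα0 : 0 < α) (hα1 : α < 1) (S : ENNReal) :
    ENNReal.ofReal (1 - α) * (S + ENNReal.ofReal α⁻¹ * S) ≤ ENNReal.ofReal α⁻¹ * S := by
  have h1 : S + ENNReal.ofReal α⁻¹ * S = (1 + ENNReal.ofReal α⁻¹) * S := by ring
  rw [h1, ← mul_assoc]
  refine mul_le_mul_left ?_ S
  rw [← ENNReal.ofReal_one, ← ENNReal.ofReal_add one_pos.le (inv_nonneg.mpr hα0.le),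
    ← ENNReal.ofReal_mul (by linarith)]
  refine ENNReal.ofReal_le_ofReal ?_
  have h := mul_inv_cancel₀ (ne_of_gt hα0)
  nlinarith

lemma bS_hit (out : V → Finset V) [Fintype V] {α : ℝ} (hα0 : 0 < α) (hα1 : α < 1)
    (U : Set V) (t μ : V) (htU : t ∉ U)
    (hmax : ∀ v, (∃ u ∈ U, v ∈ out u) → v ∉ U →
      fS out α (fun w => w.getLast? = some t ∧ ∀ x ∈ w, x ∉ U) v ≤
        fS out α (fun w => w.getLast? = some t ∧ ∀ x ∈ w, x ∉ U) μ) :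
    ∀ n (s : V),
      bS out α (fun w => w.getLast? = some t ∧ ∃ x ∈ w, x ∈ U) s n ≤
        ENNReal.ofReal α⁻¹ * fS out α (fun w => w.getLast? = some t ∧ ∀ x ∈ w, x ∉ U) μ := by
  intro n
  induction n with
  | zero => intro s; rw [bS_zero]; exact zero_le
  | succ n ih =>
    intro s
    set S := fS out α (fun w => w.getLast? = some t ∧ ∀ x ∈ w, x ∉ U) μ with hSdef
    rw [bS_succ out hα1.le]
    have h0 : wt out α (fun w => w.getLast? = some t ∧ ∃ x ∈ w, x ∈ U) ([s] : List V) = 0 := by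
      refine wt_zero ?_
      rintro ⟨h1, x, hx, hxU⟩
      simp only [List.getLast?_singleton, Option.some.injEq] at h1
      simp only [List.mem_singleton] at hx
      subst hx
      subst h1
      exact htU hxU
    rw [h0, zero_add]
    have key : ∀ b : V,
        stepE out α s b *
            (∑' l : List V, wt out α
              (fun w => (fun w => w.getLast? = some t ∧ ∃ x ∈ w, x ∈ U) (s :: w)
                ∧ w.length ≤ n) (b :: l))
          ≤ stepE out α s b * (S + ENNReal.ofReal α⁻¹ * S) := by
      intro b
      by_cases hb : b ∈ out s
      case neg => simp [stepE, hb]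
      refine mul_le_mul_right ?_ _
      have hbs : (∑' l : List V, wt out α
          (fun w => w.head? = some b ∧
            (fun w => w.getLast? = some t ∧ ∃ x ∈ w, x ∈ U) w ∧ w.length ≤ n) (b :: l))
          = bS out α (fun w => w.getLast? = some t ∧ ∃ x ∈ w, x ∈ U) b n := by
        rw [bS, tsum_wt_head b _ (fun w h => h.1)]
      have hfs : (∑' l : List V, wt out α
          (fun w => w.head? = some b ∧
            (fun w => w.getLast? = some t ∧ ∀ x ∈ w, x ∉ U) w) (b :: l))
          = fS out α (fun w => w.getLast? = some t ∧ ∀ x ∈ w, x ∉ U) b := by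
        rw [fS, tsum_wt_head b _ (fun w h => h.1)]
      by_cases hsU : s ∈ U
      · -- pointwise bound into avoid-part + hit-part
        have hpt : ∀ l : List V,
            wt out α (fun w => (fun w => w.getLast? = some t ∧ ∃ x ∈ w, x ∈ U) (s :: w)
                ∧ w.length ≤ n) (b :: l)
              ≤ wt out α (fun w => w.head? = some b ∧
                    (fun w => w.getLast? = some t ∧ ∀ x ∈ w, x ∉ U) w) (b :: l)
                + wt out α (fun w => w.head? = some b ∧
                    (fun w => w.getLast? = some t ∧ ∃ x ∈ w, x ∈ U) w ∧ w.length ≤ n)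
                    (b :: l) := by
          intro l
          refine wt_le_add ?_
          rintro ⟨⟨hl, -⟩, hlen⟩
          have hl' : (b :: l : List V).getLast? = some t := by
            rwa [List.getLast?_cons_cons] at hl
          by_cases hhit : ∃ x ∈ (b :: l : List V), x ∈ U
          · exact Or.inr ⟨rfl, ⟨hl', hhit⟩, hlen⟩
          · push_neg at hhit
            exact Or.inl ⟨rfl, hl', hhit⟩
        have hfSb : fS out α (fun w => w.getLast? = some t ∧ ∀ x ∈ w, x ∉ U) b ≤ S := by
          by_cases hbU : b ∈ U
          · have hz : fS out α (fun w => w.getLast? = some t ∧ ∀ x ∈ w, x ∉ U) b = 0 := by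
              rw [fS]
              refine (tsum_congr fun w => wt_zero ?_).trans tsum_zero
              rintro ⟨h1, -, h3⟩
              cases w with
              | nil => simp at h1
              | cons a l =>
                simp only [List.head?_cons, Option.some.injEq] at h1
                exact h3 a List.mem_cons_self (by rw [h1]; exact hbU)
            rw [hz]
            exact zero_le
          · exact hmax b ⟨s, hsU, hb⟩ hbU
        calc (∑' l : List V, wt out α
              (fun w => (fun w => w.getLast? = some t ∧ ∃ x ∈ w, x ∈ U) (s :: w)
                ∧ w.length ≤ n) (b :: l))
            ≤ ∑' l : List V,
                (wt out α (fun w => w.head? = some b ∧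
                    (fun w => w.getLast? = some t ∧ ∀ x ∈ w, x ∉ U) w) (b :: l)
                  + wt out α (fun w => w.head? = some b ∧
                      (fun w => w.getLast? = some t ∧ ∃ x ∈ w, x ∈ U) w ∧ w.length ≤ n)
                      (b :: l)) := ENNReal.tsum_le_tsum hpt
          _ = (∑' l : List V, wt out α (fun w => w.head? = some b ∧
                    (fun w => w.getLast? = some t ∧ ∀ x ∈ w, x ∉ U) w) (b :: l))
                + ∑' l : List V, wt out α (fun w => w.head? = some b ∧
                    (fun w => w.getLast? = some t ∧ ∃ x ∈ w, x ∈ U) w ∧ w.length ≤ n)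
                    (b :: l) := ENNReal.tsum_add
          _ = fS out α (fun w => w.getLast? = some t ∧ ∀ x ∈ w, x ∉ U) b
                + bS out α (fun w => w.getLast? = some t ∧ ∃ x ∈ w, x ∈ U) b n := by
              rw [hfs, hbs]
          _ ≤ S + ENNReal.ofReal α⁻¹ * S := add_le_add hfSb (ih b)
      · -- s ∉ U : walk must hit U strictly after s
        have hpt : ∀ l : List V,
            wt out α (fun w => (fun w => w.getLast? = some t ∧ ∃ x ∈ w, x ∈ U) (s :: w)
                ∧ w.length ≤ n) (b :: l)
              ≤ wt out α (fun w => w.head? = some b ∧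
                    (fun w => w.getLast? = some t ∧ ∃ x ∈ w, x ∈ U) w ∧ w.length ≤ n)
                    (b :: l) := by
          intro l
          refine wt_le ?_
          rintro ⟨⟨hl, hex⟩, hlen⟩
          have hl' : (b :: l : List V).getLast? = some t := by
            rwa [List.getLast?_cons_cons] at hl
          refine ⟨rfl, ⟨hl', ?_⟩, hlen⟩
          obtain ⟨x, hx, hxU⟩ := hex
          rcases List.mem_cons.mp hx with rfl | hx'
          · exact absurd hxU hsU
          · exact ⟨x, hx', hxU⟩
        calc (∑' l : List V, wt out α
              (fun w => (fun w => w.getLast? = some t ∧ ∃ x ∈ w, x ∈ U) (s :: w)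
                ∧ w.length ≤ n) (b :: l))
            ≤ ∑' l : List V, wt out α (fun w => w.head? = some b ∧
                  (fun w => w.getLast? = some t ∧ ∃ x ∈ w, x ∈ U) w ∧ w.length ≤ n)
                  (b :: l) := ENNReal.tsum_le_tsum hpt
          _ = bS out α (fun w => w.getLast? = some t ∧ ∃ x ∈ w, x ∈ U) b n := hbs
          _ ≤ ENNReal.ofReal α⁻¹ * S := ih b
          _ ≤ S + ENNReal.ofReal α⁻¹ * S := self_le_add_left _ _
    calc (∑' b : V, stepE out α s b *
          ∑' l : List V, wt out α
            (fun w => (fun w => w.getLast? = some t ∧ ∃ x ∈ w, x ∈ U) (s :: w)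
              ∧ w.length ≤ n) (b :: l))
        ≤ ∑' b : V, stepE out α s b * (S + ENNReal.ofReal α⁻¹ * S) :=
          ENNReal.tsum_le_tsum key
      _ = (∑' b : V, stepE out α s b) * (S + ENNReal.ofReal α⁻¹ * S) :=
          ENNReal.tsum_mul_right
      _ ≤ ENNReal.ofReal (1 - α) * (S + ENNReal.ofReal α⁻¹ * S) :=
          mul_le_mul_left (tsum_stepE out hα1.le s) _
      _ ≤ ENNReal.ofReal α⁻¹ * S := arith_step hα0 hα1 S

lemma pprVia_eq (out : V → Finset V) {α : ℝ} (hα1 : α ≤ 1) (P : List V → Prop) (s t : V) :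
    pprVia out α P s t = α * (fS out α (fun w => w.getLast? = some t ∧ P w) s).toReal := by
  rw [pprVia, fS]
  congr 1
  rw [ENNReal.tsum_toReal_eq (fun w => wt_ne_top)]
  refine tsum_congr fun w => ?_
  by_cases hc : w.head? = some s ∧ w.getLast? = some t ∧ P w
  · rw [if_pos hc]
    have : wt out α (fun w => w.head? = some s ∧
        (fun w => w.getLast? = some t ∧ P w) w) w = ENNReal.ofReal (stepP out α w) := by
      unfold wt
      exact if_pos ⟨hc.1, hc.2.1, hc.2.2⟩
    rw [this, ENNReal.toReal_ofReal (stepP_nonneg out hα1 w)]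
  · rw [if_neg hc, wt_zero (fun h => hc ⟨h.1, h.2.1, h.2.2⟩)]
    simp

end Stmt8Aux

open Stmt8Aux in
/-- π(s,U,t) ≤ π(μ,Ū,t)/α: the probability that a walk from s visits U and terminates at
t ∉ U is at most 1/α times the U-avoiding probability from the maximizing exit vertex
μ ∈ N_out(U) \ U. -/
theorem stmt_8 {V : Type*} [Fintype V] [DecidableEq V]
    (α : ℝ) (hα0 : 0 < α) (hα1 : α < 1)
    (out : V → Finset V) (U : Set V) (s t μ : V)
    (htU : t ∉ U)
    (hμmem : (∃ u ∈ U, μ ∈ out u) ∧ μ ∉ U)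
    (hμmax : ∀ v, (∃ u ∈ U, v ∈ out u) → v ∉ U →
      pprVia out α (fun w => ∀ x ∈ w, x ∉ U) v t ≤
      pprVia out α (fun w => ∀ x ∈ w, x ∉ U) μ t) :
    pprVia out α (fun w => ∃ x ∈ w, x ∈ U) s t ≤
      pprVia out α (fun w => ∀ x ∈ w, x ∉ U) μ t / α := by
  have hSfin : ∀ (P : List V → Prop) (v : V), fS out α P v ≠ ⊤ := fun P v =>
    (lt_of_le_of_lt (fS_le_total out hα0 hα1 P v) ENNReal.ofReal_lt_top).ne
  have hmax' : ∀ v, (∃ u ∈ U, v ∈ out u) → v ∉ U →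
      fS out α (fun w => w.getLast? = some t ∧ ∀ x ∈ w, x ∉ U) v ≤
        fS out α (fun w => w.getLast? = some t ∧ ∀ x ∈ w, x ∉ U) μ := by
    intro v h1 h2
    have h3 := hμmax v h1 h2
    rw [pprVia_eq out hα1.le _ v t, pprVia_eq out hα1.le _ μ t] at h3
    have h4 := le_of_mul_le_mul_left h3 hα0
    exact (ENNReal.toReal_le_toReal (hSfin _ v) (hSfin _ μ)).mp h4
  have hmain := bS_hit out hα0 hα1 U t μ htU hmax'
  have hT : fS out α (fun w => w.getLast? = some t ∧ ∃ x ∈ w, x ∈ U) s ≤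
      ENNReal.ofReal α⁻¹ *
        fS out α (fun w => w.getLast? = some t ∧ ∀ x ∈ w, x ∉ U) μ :=
    fS_le_of_bS_le out α _ s _ (fun n => hmain n s)
  rw [pprVia_eq out hα1.le _ s t, pprVia_eq out hα1.le _ μ t]
  set T := fS out α (fun w => w.getLast? = some t ∧
    (fun w => ∃ x ∈ w, x ∈ U) w) s with hTdef
  set Sμ := fS out α (fun w => w.getLast? = some t ∧
    (fun w => ∀ x ∈ w, x ∉ U) w) μ with hSdef
  have hS : Sμ ≠ ⊤ := hSfin _ μ
  have hRfin : ENNReal.ofReal α⁻¹ * Sμ ≠ ⊤ := ENNReal.mul_ne_top ENNReal.ofReal_ne_top hS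
  have hT' : T ≤ ENNReal.ofReal α⁻¹ * Sμ := hT
  have h5 : T.toReal ≤ (ENNReal.ofReal α⁻¹ * Sμ).toReal :=
    (ENNReal.toReal_le_toReal (hSfin _ s) hRfin).mpr hT'
  rw [ENNReal.toReal_mul, ENNReal.toReal_ofReal (inv_nonneg.mpr hα0.le)] at h5
  have hgoal : α * Sμ.toReal / α = Sμ.toReal := by field_simp
  rw [hgoal]
  calc α * T.toReal ≤ α * (α⁻¹ * Sμ.toReal) := by nlinarith
    _ = Sμ.toReal := by field_simp
end

section
/- Let U ⊆ V with t ∉ U and s ∈ V. With μ the maximizer of π(v,Ū,t) over v ∈ N_out(U) \ U, we have max{π(s,Ū,t), π(μ,Ū,t)} ≥ (α/2)·π(s,t). -/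
open Finset

namespace Stmt9
open Function ENNReal
variable {V : Type*} [DecidableEq V]

lemma stepP_nonneg (out : V → Finset V) {α : ℝ} (hα1 : α ≤ 1) :
    ∀ w : List V, 0 ≤ stepP out α w
  | [] => by simp [stepP]
  | [a] => by simp [stepP]
  | a :: b :: l => by
      rw [stepP]
      refine mul_nonneg ?_ (stepP_nonneg out hα1 (b :: l))
      split
      · exact div_nonneg (by linarith) (Nat.cast_nonneg _)
      · exact le_rfl

lemma stepP_append (out : V → Finset V) (α : ℝ) :
    ∀ (p : List V), p ≠ [] → ∀ (v : V) (r : List V),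
      stepP out α (p ++ v :: r) = stepP out α (p ++ [v]) * stepP out α (v :: r)
  | [], h, _, _ => absurd rfl h
  | [a], _, v, r => by simp [stepP]
  | a :: b :: p', _, v, r => by
      have ih := stepP_append out α (b :: p') (by simp) v r
      simp only [List.cons_append] at ih ⊢
      rw [stepP, stepP, ih]
      ring

lemma stepP_ne_zero_last (out : V → Finset V) (α : ℝ) :
    ∀ (p : List V) (u v : V), p.getLast? = some u →
      stepP out α (p ++ [v]) ≠ 0 → v ∈ out u
  | [], u, v, h, _ => by simp at h
  | [a], u, v, h, hne => by
      simp at h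
      subst h
      by_contra hv
      simp [stepP, hv] at hne
  | a :: b :: p', u, v, h, hne => by
      have h' : (b :: p').getLast? = some u := by
        simpa [List.getLast?_cons_cons] using h
      refine stepP_ne_zero_last out α (b :: p') u v h' ?_
      intro h0
      simp only [List.cons_append] at hne
      rw [stepP] at hne
      rw [show b :: (p' ++ [v]) = (b :: p') ++ [v] by simp] at hne
      exact hne (by rw [h0, mul_zero])


noncomputable def F (out : V → Finset V) (α : ℝ) (w : List V) : ℝ≥0∞ :=
  ENNReal.ofReal (stepP out α w)

open Classical in
noncomputable def WS (out : V → Finset V) (α : ℝ) (P : List V → Prop) (s t : V) : ℝ≥0∞ :=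
  ∑' w : List V,
    if w.head? = some s ∧ w.getLast? = some t ∧ P w then F out α w else 0

lemma pprVia_eq (out : V → Finset V) {α : ℝ} (hα1 : α ≤ 1) (P : List V → Prop) (s t : V) :
    pprVia out α P s t = α * (WS out α P s t).toReal := by
  classical
  rw [pprVia, WS, ENNReal.tsum_toReal_eq]
  · congr 1
    refine tsum_congr fun w => ?_
    split
    · rw [F, ENNReal.toReal_ofReal (stepP_nonneg out hα1 w)]
    · simp
  · intro w
    split <;> simp [F]

/-- reindex a head-fixed sum over tails -/
lemma tsum_cons (g : List V → ℝ≥0∞) (v : V) (hg : ∀ w, w.head? ≠ some v → g w = 0) :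
    ∑' w : List V, g w = ∑' r : List V, g (v :: r) := by
  refine (Function.Injective.tsum_eq (g := fun r : List V => v :: r) ?_ ?_).symm
  · intro a b h
    simpa using h
  · intro w hw
    rcases w with _ | ⟨a, r⟩
    · exact absurd (hg [] (by simp)) hw
    · have : a = v := by
        by_contra hav
        exact hw (hg _ (by simpa using hav))
      exact ⟨r, by rw [this]⟩

open Classical in
lemma WS_cons (out : V → Finset V) (α : ℝ) (P : List V → Prop) (s t : V) :
    WS out α P s t
      = ∑' r : List V, if (s :: r).getLast? = some t ∧ P (s :: r) then F out α (s :: r) else 0 := by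
  rw [WS, tsum_cons _ s (fun w hw => by simp [hw])]
  refine tsum_congr fun r => ?_
  simp

lemma F_cons_cons (out : V → Finset V) {α : ℝ} (hα1 : α ≤ 1) (a b : V) (l : List V) :
    F out α (a :: b :: l)
      = ENNReal.ofReal (if b ∈ out a then (1 - α) / (out a).card else 0) * F out α (b :: l) := by
  rw [F, F, show stepP out α (a :: b :: l)
      = (if b ∈ out a then (1 - α) / (out a).card else 0) * stepP out α (b :: l) from rfl,
    ENNReal.ofReal_mul]
  split
  · exact div_nonneg (by linarith) (Nat.cast_nonneg _)
  · exact le_rfl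

/-- finite sum over walks of fixed length from s -/
noncomputable def tL [Fintype V] (out : V → Finset V) (α : ℝ) (n : ℕ) (v : V) : ℝ≥0∞ :=
  ∑ g : Fin n → V, F out α (v :: List.ofFn g)

lemma tL_succ [Fintype V] (out : V → Finset V) {α : ℝ} (hα1 : α ≤ 1) (n : ℕ) (v : V) :
    tL out α (n + 1) v
      = ∑ b : V, ENNReal.ofReal (if b ∈ out v then (1 - α) / (out v).card else 0)
          * tL out α n b := by
  rw [tL, ← (Fin.consEquiv (fun _ : Fin (n+1) => V)).sum_comp]
  rw [Fintype.sum_prod_type]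
  refine Finset.sum_congr rfl fun b _ => ?_
  rw [tL, Finset.mul_sum]
  refine Finset.sum_congr rfl fun g _ => ?_
  have : List.ofFn ((Fin.consEquiv (fun _ : Fin (n+1) => V)) (b, g)) = b :: List.ofFn g := by
    simp [Fin.consEquiv, List.ofFn_succ]
  rw [this, F_cons_cons out hα1]

lemma tL_le [Fintype V] (out : V → Finset V) {α : ℝ} (hα0 : 0 < α) (hα1 : α < 1) :
    ∀ (n : ℕ) (v : V), tL out α n v ≤ ENNReal.ofReal ((1 - α) ^ n) := by
  intro n
  induction n with
  | zero =>
      intro v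
      rw [tL]
      rw [Fintype.sum_unique]  -- Fin 0 → V is unique
      simp [F, stepP]
  | succ n ih =>
      intro v
      rw [tL_succ out hα1.le]
      calc ∑ b : V, ENNReal.ofReal (if b ∈ out v then (1 - α) / (out v).card else 0)
              * tL out α n b
          ≤ ∑ b : V, ENNReal.ofReal (if b ∈ out v then (1 - α) / (out v).card else 0)
              * ENNReal.ofReal ((1 - α) ^ n) := by
            exact Finset.sum_le_sum fun b _ => mul_le_mul_right (ih b) _
        _ = (∑ b : V, ENNReal.ofReal (if b ∈ out v then (1 - α) / (out v).card else 0))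
              * ENNReal.ofReal ((1 - α) ^ n) := by rw [Finset.sum_mul]
        _ ≤ ENNReal.ofReal (1 - α) * ENNReal.ofReal ((1 - α) ^ n) := by
            refine mul_le_mul_left ?_ _
            rw [← ENNReal.ofReal_sum_of_nonneg]
            · refine ENNReal.ofReal_le_ofReal ?_
              rw [Finset.sum_ite_mem, Finset.univ_inter, Finset.sum_const, nsmul_eq_mul]
              rcases Nat.eq_zero_or_pos (out v).card with h | h
              · rw [h]; simp; linarith
              · rw [mul_div_cancel₀]
                positivity
            · intro b _
              split
              · exact div_nonneg (by linarith) (Nat.cast_nonneg _)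
              · exact le_rfl
        _ = ENNReal.ofReal ((1 - α) ^ (n + 1)) := by
            rw [← ENNReal.ofReal_mul (by linarith), ← pow_succ']

open Classical in
lemma headSum_le [Fintype V] (out : V → Finset V) {α : ℝ} (hα0 : 0 < α) (hα1 : α < 1) (s : V) :
    ∑' w : List V, (if w.head? = some s then F out α w else 0) ≤ (ENNReal.ofReal α)⁻¹ := by
  classical
  set f : List V → ℝ≥0∞ := fun w => if w.head? = some s then F out α w else 0 with hf
  have h1 : ∑' w : List V, f w = ∑' x : Σ n, Fin n → V, f (List.ofFn x.2) :=
    (Equiv.tsum_eq (List.equivSigmaTuple).symm f).symm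
  have h2 : ∑' x : Σ n, Fin n → V, f (List.ofFn x.2)
      = ∑' n : ℕ, ∑ g : Fin n → V, f (List.ofFn g) := by
    rw [ENNReal.tsum_sigma']
    exact tsum_congr fun n => tsum_fintype _
  have h3 : ∀ n : ℕ, ∑ g : Fin (n+1) → V, f (List.ofFn g) = tL out α n s := by
    intro n
    rw [← (Fin.consEquiv (fun _ : Fin (n+1) => V)).sum_comp, Fintype.sum_prod_type, tL]
    have key : ∀ (b : V) (g : Fin n → V),
        f (List.ofFn ((Fin.consEquiv fun _ : Fin (n+1) => V) (b, g)))
          = if b = s then F out α (b :: List.ofFn g) else 0 := by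
      intro b g
      have hofn : List.ofFn ((Fin.consEquiv fun _ : Fin (n+1) => V) (b, g))
          = b :: List.ofFn g := by
        simp [Fin.consEquiv, List.ofFn_succ]
      rw [hofn, hf]
      simp
    calc ∑ b : V, ∑ g : Fin n → V,
            f (List.ofFn ((Fin.consEquiv fun _ : Fin (n+1) => V) (b, g)))
        = ∑ b : V, if b = s then ∑ g : Fin n → V, F out α (b :: List.ofFn g) else 0 := by
          refine Finset.sum_congr rfl fun b _ => ?_
          rw [Finset.sum_congr rfl fun g _ => key b g]
          split <;> simp
      _ = ∑ g : Fin n → V, F out α (s :: List.ofFn g) := by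
          rw [Finset.sum_ite_eq' Finset.univ s
            (fun b => ∑ g : Fin n → V, F out α (b :: List.ofFn g))]
          simp
  have h0 : ∑ g : Fin 0 → V, f (List.ofFn g) = 0 := by
    rw [Fintype.sum_unique]
    simp [hf]
  have h4 : ∑' w : List V, f w = ∑' n : ℕ, tL out α n s := by
    rw [h1, h2]
    rw [← Function.Injective.tsum_eq (g := Nat.succ) Nat.succ_injective ?_]
    · exact tsum_congr h3
    · intro n hn
      rcases n with _ | m
      · exact absurd h0 hn
      · exact ⟨m, rfl⟩
  rw [h4]
  calc ∑' n : ℕ, tL out α n s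
      ≤ ∑' n : ℕ, ENNReal.ofReal ((1 - α) ^ n) :=
        ENNReal.tsum_le_tsum fun n => tL_le out hα0 hα1 n s
    _ = ∑' n : ℕ, (ENNReal.ofReal (1 - α)) ^ n := by
        exact tsum_congr fun n => ENNReal.ofReal_pow (by linarith) n
    _ = (1 - ENNReal.ofReal (1 - α))⁻¹ := ENNReal.tsum_geometric _
    _ = (ENNReal.ofReal α)⁻¹ := by
        congr 1
        rw [← ENNReal.ofReal_one, ← ENNReal.ofReal_sub _ (by linarith : (0:ℝ) ≤ 1 - α)]
        congr 1
        ring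

open Classical in
lemma WS_le_headSum (out : V → Finset V) (α : ℝ) (P : List V → Prop) (s t : V) :
    WS out α P s t ≤ ∑' w : List V, (if w.head? = some s then F out α w else 0) := by
  rw [WS]
  refine ENNReal.tsum_le_tsum fun w => ?_
  by_cases h1 : w.head? = some s
  · rw [if_pos h1]
    split
    · exact le_rfl
    · exact zero_le
  · rw [if_neg h1, if_neg (fun hc => h1 hc.1)]

lemma WS_ne_top [Fintype V] (out : V → Finset V) {α : ℝ} (hα0 : 0 < α) (hα1 : α < 1)
    (P : List V → Prop) (s t : V) : WS out α P s t ≠ ⊤ := by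
  refine ne_top_of_le_ne_top ?_ ((WS_le_headSum out α P s t).trans (headSum_le out hα0 hα1 s))
  exact ENNReal.inv_ne_top.2 (by rw [ne_eq, ENNReal.ofReal_eq_zero]; push_neg; linarith)

open Classical in
lemma WS_split (out : V → Finset V) (α : ℝ) (U : Set V) (s t : V) :
    WS out α (fun _ => True) s t
      = WS out α (fun w => ∀ x ∈ w, x ∉ U) s t
        + WS out α (fun w => ¬ ∀ x ∈ w, x ∉ U) s t := by
  rw [WS, WS, WS, ← ENNReal.tsum_add]
  refine tsum_congr fun w => ?_
  by_cases h1 : w.head? = some s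
  · by_cases h2 : w.getLast? = some t
    · by_cases h3 : ∀ x ∈ w, x ∉ U
      · rw [if_pos ⟨h1, h2, trivial⟩, if_pos ⟨h1, h2, h3⟩, if_neg (fun hc => hc.2.2 h3),
          add_zero]
      · rw [if_pos ⟨h1, h2, trivial⟩, if_neg (fun hc => h3 hc.2.2), if_pos ⟨h1, h2, h3⟩,
          zero_add]
    · simp [h2]
  · simp [h1]

lemma takeWhile_append_all (P : α → Bool) :
    ∀ (l₁ l₂ : List α), (∀ x ∈ l₁, P x = true) →
      List.takeWhile P (l₁ ++ l₂) = l₁ ++ List.takeWhile P l₂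
  | [], l₂, _ => by simp
  | a :: l, l₂, h => by
      have ha : P a = true := h a (by simp)
      simp only [List.cons_append, List.takeWhile_cons, ha, if_true]
      rw [takeWhile_append_all P l l₂ (fun x hx => h x (by simp [hx]))]

lemma dropWhile_append_all (P : α → Bool) :
    ∀ (l₁ l₂ : List α), (∀ x ∈ l₁, P x = true) →
      List.dropWhile P (l₁ ++ l₂) = List.dropWhile P l₂
  | [], l₂, _ => by simp
  | a :: l, l₂, h => by
      have ha : P a = true := h a (by simp)
      simp only [List.cons_append, List.dropWhile_cons, ha, if_true]
      exact dropWhile_append_all P l l₂ (fun x hx => h x (by simp [hx]))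

lemma head_dropWhile_false (P : α → Bool) :
    ∀ (l : List α) (u : α) (r : List α), List.dropWhile P l = u :: r → P u = false
  | [], u, r, h => by simp at h
  | a :: l, u, r, h => by
      rw [List.dropWhile_cons] at h
      by_cases ha : P a = true
      · rw [if_pos ha] at h
        exact head_dropWhile_false P l u r h
      · rw [if_neg ha] at h
        cases h
        simpa using ha

/-- uniqueness of the last-exit split -/
lemma split_unique (P : α → Bool) (p q : List α) (u : α)
    (hu : p.getLast? = some u) (hPu : P u = false) (hq : ∀ x ∈ q, P x = true) :
    List.takeWhile P (p ++ q).reverse = q.reverse ∧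
      List.dropWhile P (p ++ q).reverse = p.reverse := by
  have hcons : u :: p.reverse.tail = p.reverse :=
    List.cons_head?_tail (by rw [List.head?_reverse]; exact hu)
  have hq' : ∀ x ∈ q.reverse, P x = true := fun x hx => hq x (by simpa using hx)
  rw [List.reverse_append]
  constructor
  · rw [takeWhile_append_all P _ _ hq', ← hcons, List.takeWhile_cons, hPu]
    simp
  · rw [dropWhile_append_all P _ _ hq', ← hcons, List.dropWhile_cons, hPu]
    simp

lemma getLast?_mem' {l : List α} {u : α} (h : l.getLast? = some u) : u ∈ l := by
  have := List.cons_head?_tail (l := l.reverse) (by rw [List.head?_reverse]; exact h)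
  have : u ∈ l.reverse := by rw [← this]; simp
  simpa using this

open Classical in
lemma hit_le [Fintype V] (out : V → Finset V) {α : ℝ} (hα0 : 0 < α) (hα1 : α < 1)
    (U : Set V) (s t μ : V) (htU : t ∉ U)
    (hμ : ∀ v, (∃ u ∈ U, v ∈ out u) → v ∉ U →
      WS out α (fun w => ∀ x ∈ w, x ∉ U) v t ≤ WS out α (fun w => ∀ x ∈ w, x ∉ U) μ t) :
    WS out α (fun w => ¬ ∀ x ∈ w, x ∉ U) s t
      ≤ (ENNReal.ofReal α)⁻¹ * WS out α (fun w => ∀ x ∈ w, x ∉ U) μ t := by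
  classical
  set P : V → Bool := fun x => decide (x ∉ U) with hP
  have hPtrue : ∀ x : V, P x = true ↔ x ∉ U := by intro x; simp [hP]
  have hPfalse : ∀ x : V, P x = false ↔ x ∈ U := by
    intro x
    rw [← Bool.not_eq_true, hPtrue x, not_not]
  set Cnd : List V × List V → Prop := fun pq =>
    pq.1.head? = some s ∧ (∃ u, pq.1.getLast? = some u ∧ u ∈ U) ∧
      pq.2.getLast? = some t ∧ (∀ x ∈ pq.2, x ∉ U) with hCnd
  set H : List V × List V → ℝ≥0∞ :=
    fun pq => if Cnd pq then F out α (pq.1 ++ pq.2) else 0 with hH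
  set Wμ : ℝ≥0∞ := WS out α (fun w => ∀ x ∈ w, x ∉ U) μ t with hWμ
  have Hpos : ∀ pq : List V × List V, Cnd pq → H pq = F out α (pq.1 ++ pq.2) :=
    fun pq h => if_pos h
  have Hneg : ∀ pq : List V × List V, ¬ Cnd pq → H pq = 0 := fun pq h => if_neg h
  -- Step A : rewrite the hit sum as a sum over splits
  have stepA : WS out α (fun w => ¬ ∀ x ∈ w, x ∉ U) s t = ∑' pq : List V × List V, H pq := by
    rw [WS]
    refine tsum_eq_tsum_of_ne_zero_bij (fun x => x.1.1 ++ x.1.2) ?_ ?_ ?_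
    · -- injectivity
      rintro ⟨⟨p₁, q₁⟩, h₁⟩ ⟨⟨p₂, q₂⟩, h₂⟩ heq
      simp only [Function.mem_support, hH] at h₁ h₂
      have hc₁ : Cnd (p₁, q₁) := by
        by_contra hc; rw [if_neg hc] at h₁; exact h₁ rfl
      have hc₂ : Cnd (p₂, q₂) := by
        by_contra hc; rw [if_neg hc] at h₂; exact h₂ rfl
      obtain ⟨-, ⟨u₁, hu₁, hu₁U⟩, -, hq₁⟩ := hc₁
      obtain ⟨-, ⟨u₂, hu₂, hu₂U⟩, -, hq₂⟩ := hc₂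
      have hs₁ := split_unique P p₁ q₁ u₁ hu₁ ((hPfalse u₁).2 hu₁U)
        (fun x hx => (hPtrue x).2 (hq₁ x hx))
      have hs₂ := split_unique P p₂ q₂ u₂ hu₂ ((hPfalse u₂).2 hu₂U)
        (fun x hx => (hPtrue x).2 (hq₂ x hx))
      have hw : p₁ ++ q₁ = p₂ ++ q₂ := heq
      have hqeq : q₁ = q₂ := by
        have h12 : List.takeWhile P (p₁ ++ q₁).reverse = q₂.reverse := by
          rw [hw]; exact hs₂.1
        exact List.reverse_injective (hs₁.1.symm.trans h12)
      have hpeq : p₁ = p₂ := by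
        have h12 : List.dropWhile P (p₁ ++ q₁).reverse = p₂.reverse := by
          rw [hw]; exact hs₂.2
        exact List.reverse_injective (hs₁.2.symm.trans h12)
      exact Subtype.ext (Prod.ext hpeq hqeq)
    · -- support f ⊆ range
      intro w hw
      simp only [Function.mem_support] at hw
      have hc : w.head? = some s ∧ w.getLast? = some t ∧ ¬ ∀ x ∈ w, x ∉ U := by
        by_contra hc
        rw [if_neg hc] at hw
        exact hw rfl
      obtain ⟨hws, hwt, hwhit⟩ := hc
      push_neg at hwhit
      obtain ⟨x₀, hx₀w, hx₀U⟩ := hwhit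
      set q : List V := (List.takeWhile P w.reverse).reverse with hq
      set p : List V := (List.dropWhile P w.reverse).reverse with hp
      have hpq : p ++ q = w := by
        rw [hp, hq, ← List.reverse_append, List.takeWhile_append_dropWhile,
          List.reverse_reverse]
      have hdnil : List.dropWhile P w.reverse ≠ [] := by
        intro hnil
        rw [List.dropWhile_eq_nil_iff] at hnil
        exact (hPtrue x₀).1 (hnil x₀ (by simpa using hx₀w)) hx₀U
      obtain ⟨u, r', hur⟩ : ∃ u r', List.dropWhile P w.reverse = u :: r' := by
        rcases hd : List.dropWhile P w.reverse with _ | ⟨u, r'⟩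
        · exact absurd hd hdnil
        · exact ⟨u, r', rfl⟩
      have huU : u ∈ U := (hPfalse u).1 (head_dropWhile_false P w.reverse u r' hur)
      have hplast : p.getLast? = some u := by
        rw [hp, hur, List.getLast?_reverse]
        rfl
      have hphead : p.head? = some s := by
        have hpne : p ≠ [] := by
          rw [hp, hur]; simp
        have := hpq
        rcases p with _ | ⟨a, p'⟩
        · exact absurd rfl hpne
        · rw [← this] at hws
          simpa using hws
      have hwrev : w.reverse = t :: w.reverse.tail := by
        refine (List.cons_head?_tail ?_).symm
        rw [List.head?_reverse, hwt]
        rfl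
      have hqlast : q.getLast? = some t := by
        rw [hq, List.getLast?_reverse, hwrev, List.takeWhile_cons,
          if_pos ((hPtrue t).2 htU)]
        rfl
      have hqavoid : ∀ x ∈ q, x ∉ U := by
        intro x hx
        exact (hPtrue x).1 (List.mem_takeWhile_imp (by simpa [hq] using hx))
      have hCpq : Cnd (p, q) := ⟨hphead, ⟨u, hplast, huU⟩, hqlast, hqavoid⟩
      have humem : u ∈ w := by
        rw [← hpq]
        exact List.mem_append_left q (getLast?_mem' hplast)
      have hHne : H (p, q) ≠ 0 := by
        rw [hH]
        simp only [if_pos hCpq, hpq]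
        intro h0
        apply hw
        rw [if_pos ⟨hws, hwt, fun hall => (hall u humem) huU⟩]
        exact h0
      exact ⟨⟨(p, q), hHne⟩, hpq⟩
    · -- values agree
      rintro ⟨⟨p, q⟩, hne⟩
      simp only [Function.mem_support, hH] at hne ⊢
      have hc : Cnd (p, q) := by by_contra hc; rw [if_neg hc] at hne; exact hne rfl
      obtain ⟨hps, ⟨u, hpu, huU⟩, hqt, hqa⟩ := id hc
      have hpne : p ≠ [] := by intro h; rw [h] at hps; simp at hps
      have hqne : q ≠ [] := by intro h; rw [h] at hqt; simp at hqt
      rw [if_pos hc]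
      have h1 : (p ++ q).head? = some s := by
        rcases p with _ | ⟨a, p'⟩
        · exact absurd rfl hpne
        · simpa using hps
      have h2 : (p ++ q).getLast? = some t := by
        rw [List.getLast?_append_of_ne_nil _ hqne]
        exact hqt
      have h3 : ¬ ∀ x ∈ p ++ q, x ∉ U :=
        fun hall => (hall u (List.mem_append_left q (getLast?_mem' hpu))) huU
      have hcond : ((p, q).1 ++ (p, q).2).head? = some s ∧
          ((p, q).1 ++ (p, q).2).getLast? = some t ∧
          ¬ ∀ x ∈ (p, q).1 ++ (p, q).2, x ∉ U := ⟨h1, h2, h3⟩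
      rw [if_pos hcond]
  rw [stepA, ENNReal.tsum_prod']
  set A : List V → ℝ≥0∞ := fun p =>
    if p.head? = some s ∧ ∃ u, p.getLast? = some u ∧ u ∈ U
    then ∑' v : V, F out α (p ++ [v]) else 0 with hA
  have stepC : ∀ p : List V, ∑' q : List V, H (p, q) ≤ A p * Wμ := by
    intro p
    by_cases hc : p.head? = some s ∧ ∃ u, p.getLast? = some u ∧ u ∈ U
    · obtain ⟨hps, u, hpu, huU⟩ := hc
      have hpne : p ≠ [] := fun h => by rw [h] at hps; simp at hps
      have hre : ∑' q : List V, H (p, q) = ∑' vr : V × List V, H (p, vr.1 :: vr.2) := by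
        refine (Function.Injective.tsum_eq (g := fun vr : V × List V => vr.1 :: vr.2)
          ?_ ?_).symm
        · intro a b hab
          simp only [List.cons.injEq] at hab
          exact Prod.ext hab.1 hab.2
        · intro q hq
          simp only [Function.mem_support] at hq
          rcases q with _ | ⟨v, r⟩
          · exact absurd (Hneg (p, []) (by rintro ⟨-, -, hqt, -⟩; simp at hqt)) hq
          · exact ⟨(v, r), rfl⟩
      rw [hre, ENNReal.tsum_prod']
      have inner : ∀ v : V, ∑' r : List V, H (p, (v :: r)) ≤ F out α (p ++ [v]) * Wμ := by
        intro v
        by_cases hFv : F out α (p ++ [v]) = 0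
        · have hz : ∀ r, H (p, (v :: r)) = 0 := by
            intro r
            by_cases hcr : Cnd (p, v :: r)
            · rw [Hpos _ hcr]
              show F out α (p ++ v :: r) = 0
              rw [F, stepP_append out α p hpne v r]
              have h0 : stepP out α (p ++ [v]) = 0 := by
                have hnn := stepP_nonneg out hα1.le (p ++ [v])
                rw [F, ENNReal.ofReal_eq_zero] at hFv
                linarith
              rw [h0, zero_mul, ENNReal.ofReal_zero]
            · exact Hneg _ hcr
          rw [ENNReal.tsum_eq_zero.2 hz]
          exact zero_le
        · by_cases hvU : v ∈ U
          · have hz : ∀ r, H (p, (v :: r)) = 0 := fun r =>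
              Hneg _ (by rintro ⟨-, -, -, hav⟩; exact hav v (by simp) hvU)
            rw [ENNReal.tsum_eq_zero.2 hz]
            exact zero_le
          · have hvout : ∃ u' ∈ U, v ∈ out u' := by
              refine ⟨u, huU, stepP_ne_zero_last out α p u v hpu ?_⟩
              intro h0
              exact hFv (by rw [F, h0, ENNReal.ofReal_zero])
            have term : ∀ r : List V, H (p, v :: r)
                ≤ F out α (p ++ [v]) *
                  (if (v :: r).getLast? = some t ∧ (∀ x ∈ (v :: r), x ∉ U)
                    then F out α (v :: r) else 0) := by
              intro r
              by_cases hcr : Cnd (p, v :: r)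
              · obtain ⟨-, -, hqt, hqa⟩ := id hcr
                rw [Hpos _ hcr,
                  if_pos (⟨hqt, hqa⟩ : (v :: r).getLast? = some t ∧ ∀ x ∈ v :: r, x ∉ U)]
                show F out α (p ++ v :: r) ≤ _
                rw [F, stepP_append out α p hpne v r,
                  ENNReal.ofReal_mul (stepP_nonneg out hα1.le _)]
                exact le_rfl
              · rw [Hneg _ hcr]
                exact zero_le
            calc ∑' r : List V, H (p, v :: r)
                ≤ ∑' r : List V, F out α (p ++ [v]) *
                    (if (v :: r).getLast? = some t ∧ (∀ x ∈ (v :: r), x ∉ U)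
                      then F out α (v :: r) else 0) := ENNReal.tsum_le_tsum term
              _ = F out α (p ++ [v]) *
                    ∑' r : List V, (if (v :: r).getLast? = some t ∧ (∀ x ∈ (v :: r), x ∉ U)
                      then F out α (v :: r) else 0) := ENNReal.tsum_mul_left
              _ = F out α (p ++ [v]) * WS out α (fun w => ∀ x ∈ w, x ∉ U) v t := by
                  rw [WS_cons out α (fun w => ∀ x ∈ w, x ∉ U) v t]
                  congr 1
                  exact tsum_congr fun r => by
                    by_cases h : (v :: r).getLast? = some t ∧ ∀ x ∈ v :: r, x ∉ U <;>
                      simp [h]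
              _ ≤ F out α (p ++ [v]) * Wμ := mul_le_mul_right (hμ v hvout hvU) _
      calc ∑' v : V, ∑' r : List V, H (p, (v :: r))
          ≤ ∑' v : V, F out α (p ++ [v]) * Wμ := ENNReal.tsum_le_tsum inner
        _ = (∑' v : V, F out α (p ++ [v])) * Wμ := ENNReal.tsum_mul_right
        _ = A p * Wμ := by
            have hAp : A p = ∑' v : V, F out α (p ++ [v]) := if_pos ⟨hps, u, hpu, huU⟩
            rw [hAp]
    · have hz : ∀ q, H (p, q) = 0 := fun q =>
        Hneg _ (by rintro ⟨h1, h2, -⟩; exact hc ⟨h1, h2⟩)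
      rw [ENNReal.tsum_eq_zero.2 hz]
      exact zero_le
  have stepD : ∑' p : List V, A p ≤ (ENNReal.ofReal α)⁻¹ := by
    set g : List V × V → ℝ≥0∞ := fun pv =>
      if pv.1.head? = some s ∧ (∃ u, pv.1.getLast? = some u ∧ u ∈ U)
        then F out α (pv.1 ++ [pv.2]) else 0 with hg
    have h1 : ∀ p : List V, A p = ∑' v : V, g (p, v) := by
      intro p
      by_cases hc : p.head? = some s ∧ ∃ u, p.getLast? = some u ∧ u ∈ U
      · have hAp : A p = ∑' v : V, F out α (p ++ [v]) := if_pos hc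
        rw [hAp]
        exact tsum_congr fun v => (if_pos hc).symm
      · have hAp : A p = 0 := if_neg hc
        rw [hAp]
        exact ((tsum_congr fun v : V => if_neg hc).trans tsum_zero).symm
    have hinj : Function.Injective (fun pv : List V × V => pv.1 ++ [pv.2]) := by
      intro a b h
      simp only at h
      have h1' := congrArg List.dropLast h
      have h2' := congrArg List.getLast? h
      simp only [List.dropLast_concat, List.getLast?_concat, Option.some.injEq] at h1' h2'
      exact Prod.ext h1' h2'
    calc ∑' p : List V, A p
        = ∑' p : List V, ∑' v : V, g (p, v) := tsum_congr h1
      _ = ∑' pv : List V × V, g pv := ENNReal.tsum_prod'.symm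
      _ ≤ ∑' pv : List V × V,
            (fun w => if w.head? = some s then F out α w else 0) (pv.1 ++ [pv.2]) := by
          refine ENNReal.tsum_le_tsum fun pv => ?_
          by_cases hc : pv.1.head? = some s ∧ (∃ u, pv.1.getLast? = some u ∧ u ∈ U)
          · have hgp : g pv = F out α (pv.1 ++ [pv.2]) := if_pos hc
            rw [hgp]
            have hh : (pv.1 ++ [pv.2]).head? = some s := by
              rcases hp : pv.1 with _ | ⟨a, p'⟩
              · rw [hp] at hc
                simp at hc
              · rw [hp] at hc
                simpa using hc.1
            simp only [hh, if_pos rfl]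
            exact le_rfl
          · have hgp : g pv = 0 := if_neg hc
            rw [hgp]
            exact zero_le
      _ ≤ ∑' w : List V, (if w.head? = some s then F out α w else 0) :=
          ENNReal.tsum_comp_le_tsum_of_injective hinj _
      _ ≤ (ENNReal.ofReal α)⁻¹ := headSum_le out hα0 hα1 s
  calc ∑' p : List V, ∑' q : List V, H (p, q)
      ≤ ∑' p : List V, A p * Wμ := ENNReal.tsum_le_tsum stepC
    _ = (∑' p : List V, A p) * Wμ := ENNReal.tsum_mul_right
    _ ≤ (ENNReal.ofReal α)⁻¹ * Wμ := mul_le_mul_left stepD _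
end Stmt9

/-- max{π(s,Ū,t), π(μ,Ū,t)} ≥ (α/2)·π(s,t), where μ is the maximizer of π(·,Ū,t) over
N_out(U) \ U. -/
theorem stmt_9 {V : Type*} [Fintype V] [DecidableEq V]
    (α : ℝ) (hα0 : 0 < α) (hα1 : α < 1)
    (out : V → Finset V) (U : Set V) (s t μ : V)
    (htU : t ∉ U)
    (hμmem : (∃ u ∈ U, μ ∈ out u) ∧ μ ∉ U)
    (hμmax : ∀ v, (∃ u ∈ U, v ∈ out u) → v ∉ U →
      pprVia out α (fun w => ∀ x ∈ w, x ∉ U) v t ≤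
      pprVia out α (fun w => ∀ x ∈ w, x ∉ U) μ t) :
    (α / 2) * pprVia out α (fun _ => True) s t ≤
      max (pprVia out α (fun w => ∀ x ∈ w, x ∉ U) s t)
          (pprVia out α (fun w => ∀ x ∈ w, x ∉ U) μ t) := by
  classical
  have hα1' : α ≤ 1 := hα1.le
  have hne : ∀ (P : List V → Prop) (a b : V), Stmt9.WS out α P a b ≠ ⊤ :=
    fun P a b => Stmt9.WS_ne_top out hα0 hα1 P a b
  have hμENN : ∀ v, (∃ u ∈ U, v ∈ out u) → v ∉ U →
      Stmt9.WS out α (fun w => ∀ x ∈ w, x ∉ U) v t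
        ≤ Stmt9.WS out α (fun w => ∀ x ∈ w, x ∉ U) μ t := by
    intro v hv1 hv2
    have h := hμmax v hv1 hv2
    rw [Stmt9.pprVia_eq out hα1' (fun w => ∀ x ∈ w, x ∉ U) v t,
      Stmt9.pprVia_eq out hα1' (fun w => ∀ x ∈ w, x ∉ U) μ t] at h
    have h2 := le_of_mul_le_mul_left h hα0
    exact (ENNReal.toReal_le_toReal (hne _ _ _) (hne _ _ _)).1 h2
  have hhit := Stmt9.hit_le out hα0 hα1 U s t μ htU hμENN
  have hsplit := Stmt9.WS_split out α U s t
  rw [Stmt9.pprVia_eq out hα1' (fun _ => True) s t,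
    Stmt9.pprVia_eq out hα1' (fun w => ∀ x ∈ w, x ∉ U) s t,
    Stmt9.pprVia_eq out hα1' (fun w => ∀ x ∈ w, x ∉ U) μ t]
  set T : ℝ := (Stmt9.WS out α (fun _ => True) s t).toReal with hT
  set A : ℝ := (Stmt9.WS out α (fun w => ∀ x ∈ w, x ∉ U) s t).toReal with hA
  set B : ℝ := (Stmt9.WS out α (fun w => ∀ x ∈ w, x ∉ U) μ t).toReal with hB
  set Hh : ℝ := (Stmt9.WS out α (fun w => ¬ ∀ x ∈ w, x ∉ U) s t).toReal with hHh
  have hTr : T = A + Hh := by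
    rw [hT, hsplit, ENNReal.toReal_add (hne _ _ _) (hne _ _ _)]
  have hHr : Hh ≤ α⁻¹ * B := by
    have h1 : Hh ≤ ((ENNReal.ofReal α)⁻¹
        * Stmt9.WS out α (fun w => ∀ x ∈ w, x ∉ U) μ t).toReal := by
      refine ENNReal.toReal_mono ?_ hhit
      exact ENNReal.mul_ne_top
        (ENNReal.inv_ne_top.2 (by rw [ne_eq, ENNReal.ofReal_eq_zero]; push_neg; linarith))
        (hne _ _ _)
    rwa [ENNReal.toReal_mul, ENNReal.toReal_inv, ENNReal.toReal_ofReal hα0.le] at h1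
  have hT0 : 0 ≤ T := ENNReal.toReal_nonneg
  have hA0 : 0 ≤ A := ENNReal.toReal_nonneg
  have hB0 : 0 ≤ B := ENNReal.toReal_nonneg
  have hH0 : 0 ≤ Hh := ENNReal.toReal_nonneg
  rcases le_or_gt (T / 2) A with h | h
  · refine le_trans ?_ (le_max_left _ _)
    nlinarith [mul_le_mul_of_nonneg_left h hα0.le,
      mul_nonneg (by linarith : (0:ℝ) ≤ 1 - α) (mul_nonneg hα0.le hT0)]
  · refine le_trans ?_ (le_max_right _ _)
    have hHT : T / 2 ≤ Hh := by linarith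
    have hBge : α * Hh ≤ B := by
      have h2 := mul_le_mul_of_nonneg_left hHr hα0.le
      rwa [← mul_assoc, mul_inv_cancel₀ hα0.ne', one_mul] at h2
    have h3 : α * (T / 2) ≤ B := le_trans (mul_le_mul_of_nonneg_left hHT hα0.le) hBge
    nlinarith [mul_le_mul_of_nonneg_left h3 hα0.le]
end

section
/- Let v, t be vertices of a finite directed graph H, and let H' be obtained from H by removing some subset of the in-edges of v. Then π_{H'}(v,t) ≥ α·π_H(v,t), where π denotes the α-discounted random-walk termination probability. -/
open Finset

open Classical in
/-- The probability that an α-discounted random walk from s terminates at t. -/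
noncomputable def ppr {V : Type*} [DecidableEq V] (out : V → Finset V) (α : ℝ)
    (s t : V) : ℝ :=
  α * ∑' w : List V,
    if w.head? = some s ∧ w.getLast? = some t then stepP out α w else 0

section Aux

variable {V : Type*} [DecidableEq V] {α : ℝ}

lemma stepP_nil (out : V → Finset V) : stepP out α ([] : List V) = 0 := rfl

lemma stepP_single (out : V → Finset V) (a : V) : stepP out α [a] = 1 := rfl

lemma stepP_cons_cons (out : V → Finset V) (a b : V) (l : List V) :
    stepP out α (a :: b :: l)
      = (if b ∈ out a then (1 - α) / (out a).card else 0) * stepP out α (b :: l) := rfl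

lemma stepP_nonneg (out : V → Finset V) (hα : α ≤ 1) (l : List V) : 0 ≤ stepP out α l := by
  induction l with
  | nil => simp [stepP_nil]
  | cons a l ih =>
    cases l with
    | nil => simp [stepP_single]
    | cons b l2 =>
      rw [stepP_cons_cons]
      refine mul_nonneg ?_ ih
      split
      · exact div_nonneg (by linarith) (Nat.cast_nonneg _)
      · exact le_refl 0

lemma stepP_append (out : V → Finset V) (a : V) (l₂ : List V) :
    ∀ l₁ : List V,
      stepP out α (l₁ ++ a :: l₂) = stepP out α (l₁ ++ [a]) * stepP out α (a :: l₂)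
  | [] => by rw [List.nil_append, List.nil_append, stepP_single, one_mul]
  | [b] => by
      simp only [List.cons_append, List.nil_append, stepP_cons_cons, stepP_single, mul_one]
  | b :: c :: l₁ => by
      have ih := stepP_append out a l₂ (c :: l₁)
      simp only [List.cons_append] at ih ⊢
      rw [stepP_cons_cons, stepP_cons_cons, ih, mul_assoc]

lemma stepP_split (out : V → Finset V) (v : V) {p : List V} (q : List V)
    (hp : p.getLast? = some v) :
    stepP out α (p ++ q) = stepP out α p * stepP out α (v :: q) := by
  have h : p.dropLast ++ [v] = p := List.dropLast_append_getLast? v hp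
  conv_lhs => rw [← h]
  rw [List.append_assoc, List.singleton_append, stepP_append out v q p.dropLast, h]

omit [DecidableEq V] in
lemma head?_cons_self {l : List V} {s : V} (h : l.head? = some s) : l = s :: l.tail := by
  cases l with
  | nil => simp at h
  | cons a l' =>
    simp only [List.head?_cons, Option.some.injEq] at h
    rw [h]
    rfl

/-- The total stepP-mass of any finite set of walks of length `n+1` starting at `s`
is at most `(1-α)^n`. -/
lemma sum_stepP_le [Fintype V] (out : V → Finset V) (hα1 : α ≤ 1) :
    ∀ (n : ℕ) (s : V) (S : Finset (List V)),
      (∀ l ∈ S, l.length = n + 1 ∧ l.head? = some s) →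
      ∑ l ∈ S, stepP out α l ≤ (1 - α) ^ n := by
  intro n
  induction n with
  | zero =>
    intro s S hS
    have hsub : S ⊆ {[s]} := by
      intro l hl
      obtain ⟨hlen, hhead⟩ := hS l hl
      rw [Finset.mem_singleton]
      cases l with
      | nil => simp at hlen
      | cons a l' =>
        simp only [List.length_cons, Nat.add_right_cancel_iff, List.length_eq_zero_iff] at hlen
        simp only [List.head?_cons, Option.some.injEq] at hhead
        rw [hlen, hhead]
    calc ∑ l ∈ S, stepP out α l ≤ ∑ l ∈ ({[s]} : Finset (List V)), stepP out α l :=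
          Finset.sum_le_sum_of_subset_of_nonneg hsub
            (fun l _ _ => stepP_nonneg out hα1 l)
      _ = 1 := by simp [stepP_single]
      _ = (1 - α) ^ 0 := by rw [pow_zero]
  | succ n ih =>
    intro s S hS
    classical
    rw [← Finset.sum_fiberwise_of_maps_to
      (t := (Finset.univ : Finset (Option V)))
      (g := fun l : List V => l.tail.head?) (fun x _ => Finset.mem_univ _)]
    refine le_trans (Finset.sum_le_sum (g := fun y : Option V => Option.elim y 0
      (fun b => (if b ∈ out s then (1 - α) / (out s).card else 0) * (1 - α) ^ n)) ?_) ?_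
    · intro y _
      cases y with
      | none =>
        rw [Finset.sum_eq_zero]
        · exact le_refl 0
        intro l hl
        rw [Finset.mem_filter] at hl
        obtain ⟨hlen, hhead⟩ := hS l hl.1
        exfalso
        have hnone := hl.2
        cases l with
        | nil => simp at hlen
        | cons a l' =>
          cases l' with
          | nil => simp at hlen
          | cons b l'' => simp at hnone
      | some b =>
        have hform : ∀ l ∈ S.filter (fun l => l.tail.head? = some b),
            l = s :: b :: l.tail.tail ∧ l.tail.tail.length = n := by
          intro l hl
          rw [Finset.mem_filter] at hl
          obtain ⟨hlen, hhead⟩ := hS l hl.1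
          have h1 : l = s :: l.tail := head?_cons_self hhead
          have h2 : l.tail = b :: l.tail.tail := head?_cons_self hl.2
          have h3 : l = s :: b :: l.tail.tail := by
            conv_lhs => rw [h1, h2]
          refine ⟨h3, ?_⟩
          rw [h3] at hlen
          simp only [List.length_cons] at hlen
          omega
        have hstep : ∑ l ∈ S.filter (fun l => l.tail.head? = some b), stepP out α l
            = (if b ∈ out s then (1 - α) / (out s).card else 0) *
              ∑ l ∈ S.filter (fun l => l.tail.head? = some b), stepP out α l.tail := by
          rw [Finset.mul_sum]
          apply Finset.sum_congr rfl
          intro l hl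
          obtain ⟨h3, _⟩ := hform l hl
          conv_lhs => rw [h3, stepP_cons_cons]
          congr 1
          conv_rhs => rw [h3]
          rfl
        have himg : ∑ l ∈ S.filter (fun l => l.tail.head? = some b), stepP out α l.tail
            = ∑ l' ∈ (S.filter (fun l => l.tail.head? = some b)).image List.tail,
                stepP out α l' := by
          rw [Finset.sum_image]
          intro x hx y hy hxy
          obtain ⟨h3x, _⟩ := hform x hx
          obtain ⟨h3y, _⟩ := hform y hy
          rw [h3x, h3y]
          rw [h3x, h3y] at hxy
          simpa using hxy
        have hih : ∑ l' ∈ (S.filter (fun l => l.tail.head? = some b)).image List.tail,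
            stepP out α l' ≤ (1 - α) ^ n := by
          apply ih b
          intro l' hl'
          rw [Finset.mem_image] at hl'
          obtain ⟨l, hl, rfl⟩ := hl'
          obtain ⟨h3, h4⟩ := hform l hl
          constructor
          · conv_lhs => rw [h3]
            simp only [List.tail_cons, List.length_cons]
            omega
          · exact (Finset.mem_filter.mp hl).2
        have hcnn : 0 ≤ (if b ∈ out s then (1 - α) / (out s).card else 0) := by
          split
          · exact div_nonneg (by linarith) (Nat.cast_nonneg _)
          · exact le_refl 0
        calc ∑ l ∈ S.filter (fun l => l.tail.head? = some b), stepP out α l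
            = (if b ∈ out s then (1 - α) / (out s).card else 0) *
              ∑ l ∈ S.filter (fun l => l.tail.head? = some b), stepP out α l.tail := hstep
          _ = (if b ∈ out s then (1 - α) / (out s).card else 0) *
              ∑ l' ∈ (S.filter (fun l => l.tail.head? = some b)).image List.tail,
                stepP out α l' := by rw [himg]
          _ ≤ (if b ∈ out s then (1 - α) / (out s).card else 0) * (1 - α) ^ n :=
              mul_le_mul_of_nonneg_left hih hcnn
          _ = Option.elim (some b) 0
              (fun b => (if b ∈ out s then (1 - α) / (out s).card else 0) * (1 - α) ^ n) := rfl
    · calc ∑ y ∈ (Finset.univ : Finset (Option V)), Option.elim y 0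
            (fun b => (if b ∈ out s then (1 - α) / (out s).card else 0) * (1 - α) ^ n)
          = ∑ b : V, (if b ∈ out s then (1 - α) / (out s).card else 0) * (1 - α) ^ n := by
            rw [Fintype.sum_option]
            simp
        _ = (∑ b : V, if b ∈ out s then (1 - α) / (out s).card else 0) * (1 - α) ^ n := by
            rw [Finset.sum_mul]
        _ ≤ (1 - α) * (1 - α) ^ n := by
            apply mul_le_mul_of_nonneg_right _ (pow_nonneg (by linarith) n)
            rw [Finset.sum_ite_mem, Finset.univ_inter, Finset.sum_const, nsmul_eq_mul]
            rcases Nat.eq_zero_or_pos (out s).card with h | h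
            · rw [h]
              simp
              linarith
            · rw [mul_div_cancel₀ _ (Nat.cast_ne_zero.mpr h.ne' : ((out s).card : ℝ) ≠ 0)]
        _ = (1 - α) ^ (n + 1) := by ring

/-- Summability and a `1/α` bound for indicator-restricted walk sums. -/
lemma walk_summable [Fintype V] (out : V → Finset V) (hα0 : 0 < α) (hα1 : α < 1)
    (s : V) (f : List V → ℝ) (h0 : ∀ l, 0 ≤ f l)
    (hle : ∀ l, f l ≤ if l.head? = some s then stepP out α l else 0) :
    Summable f ∧ ∑' l, f l ≤ α⁻¹ := by
  classical
  have hb : ∀ S : Finset (List V), ∑ l ∈ S, f l ≤ α⁻¹ := by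
    intro S
    have h1 : ∑ l ∈ S, f l
        ≤ ∑ l ∈ S.filter (fun l => l.head? = some s), stepP out α l := by
      rw [Finset.sum_filter]
      exact Finset.sum_le_sum (fun l _ => hle l)
    have h2 : ∑ l ∈ S.filter (fun l => l.head? = some s), stepP out α l
        ≤ ∑ m ∈ (S.filter (fun l => l.head? = some s)).image
            (fun l : List V => l.length - 1), (1 - α) ^ m := by
      rw [← Finset.sum_fiberwise_of_maps_to
        (g := fun l : List V => l.length - 1)
        (fun x hx => Finset.mem_image_of_mem _ hx)]
      apply Finset.sum_le_sum
      intro m _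
      apply sum_stepP_le out hα1.le m s
      intro l hl
      rw [Finset.mem_filter, Finset.mem_filter] at hl
      have h3 := hl.1.2
      have hne : l ≠ [] := by
        intro h
        rw [h] at h3
        simp at h3
      have hpos : 1 ≤ l.length := List.length_pos_iff.mpr hne
      refine ⟨?_, h3⟩
      have h4 := hl.2
      omega
    have h4 : ∑ m ∈ (S.filter (fun l => l.head? = some s)).image
        (fun l : List V => l.length - 1), (1 - α) ^ m ≤ α⁻¹ := by
      have hsum : Summable (fun m : ℕ => (1 - α) ^ m) :=
        summable_geometric_of_lt_one (by linarith) (by linarith)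
      calc ∑ m ∈ (S.filter (fun l => l.head? = some s)).image
            (fun l : List V => l.length - 1), (1 - α) ^ m
          ≤ ∑' m : ℕ, (1 - α) ^ m :=
            Summable.sum_le_tsum _ (fun m _ => pow_nonneg (by linarith) m) hsum
        _ = (1 - (1 - α))⁻¹ := tsum_geometric_of_lt_one (by linarith) (by linarith)
        _ = α⁻¹ := by norm_num
    linarith
  have hs : Summable f := summable_of_sum_le (Pi.le_def.mpr h0) hb
  exact ⟨hs, Summable.tsum_le_of_sum_le hs hb⟩

/-- Step probabilities do not decrease on walks avoiding `v` (after the start)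
when in-edges of `v` are removed. -/
lemma stepP_mono (out out' : V → Finset V) (v : V) (hα1 : α ≤ 1)
    (hrem : ∀ w, out' w = out w ∨ out' w = (out w).erase v) :
    ∀ l : List V, v ∉ l.tail → stepP out α l ≤ stepP out' α l := by
  intro l
  induction l with
  | nil => intro _; exact le_refl _
  | cons a l ih =>
    cases l with
    | nil => intro _; exact le_refl _
    | cons b l2 =>
      intro hv
      simp only [List.tail_cons, List.mem_cons, not_or] at hv
      obtain ⟨hbv, hvl2⟩ := hv
      have hv2 : v ∉ (b :: l2).tail := hvl2
      rw [stepP_cons_cons, stepP_cons_cons]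
      have hfac : (if b ∈ out a then (1 - α) / (out a).card else 0)
          ≤ (if b ∈ out' a then (1 - α) / (out' a).card else 0) := by
        rcases hrem a with h | h
        · rw [h]
        · rw [h]
          by_cases hb : b ∈ out a
          · have hb' : b ∈ (out a).erase v := Finset.mem_erase.mpr ⟨Ne.symm hbv, hb⟩
            rw [if_pos hb, if_pos hb']
            apply div_le_div_of_nonneg_left (by linarith)
            · exact_mod_cast Finset.card_pos.mpr ⟨b, hb'⟩
            · exact_mod_cast Finset.card_erase_le
          · have hb' : b ∉ (out a).erase v := fun h' => hb (Finset.mem_of_mem_erase h')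
            rw [if_neg hb, if_neg hb']
      have hfacnn : 0 ≤ (if b ∈ out' a then (1 - α) / (out' a).card else 0) := by
        split
        · exact div_nonneg (by linarith) (Nat.cast_nonneg _)
        · exact le_refl 0
      exact mul_le_mul hfac (ih hv2) (stepP_nonneg out hα1 _) hfacnn

/-- Split a list at the last occurrence of `v`. -/
def splitv (v : V) (w : List V) : List V × List V :=
  if v ∈ w then
    ((w.reverse.dropWhile (fun a => decide (a ≠ v))).reverse,
     v :: (w.reverse.takeWhile (fun a => decide (a ≠ v))).reverse)
  else (w, [])

lemma splitv_recon (v : V) (w : List V) : (splitv v w).1 ++ (splitv v w).2.tail = w := by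
  rw [splitv]
  split
  · simp only [List.tail_cons]
    have h := congrArg List.reverse
      (List.takeWhile_append_dropWhile (p := fun a => decide (a ≠ v)) (l := w.reverse))
    rw [List.reverse_append, List.reverse_reverse] at h
    exact h
  · simp

lemma splitv_injective (v : V) : Function.Injective (splitv v) := by
  intro w₁ w₂ h
  have h1 := splitv_recon v w₁
  have h2 := splitv_recon v w₂
  rw [← h1, ← h2, h]

lemma splitv_of_mem (v : V) {w : List V} (hv : v ∈ w) :
    ∃ p q : List V, splitv v w = (p, v :: q) ∧ w = p ++ q ∧ p ≠ [] ∧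
      p.getLast? = some v ∧ ∀ x ∈ q, x ≠ v := by
  refine ⟨(w.reverse.dropWhile (fun a => decide (a ≠ v))).reverse,
    (w.reverse.takeWhile (fun a => decide (a ≠ v))).reverse, ?_, ?_, ?_, ?_, ?_⟩
  · rw [splitv, if_pos hv]
  · have h := congrArg List.reverse
      (List.takeWhile_append_dropWhile (p := fun a => decide (a ≠ v)) (l := w.reverse))
    rw [List.reverse_append, List.reverse_reverse] at h
    exact h.symm
  · have hvr : v ∈ w.reverse := List.mem_reverse.mpr hv
    intro hemp
    rw [List.reverse_eq_nil_iff] at hemp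
    have h := List.takeWhile_append_dropWhile (p := fun a => decide (a ≠ v)) (l := w.reverse)
    rw [hemp, List.append_nil] at h
    have hv2 : v ∈ w.reverse.takeWhile (fun a => decide (a ≠ v)) := by rw [h]; exact hvr
    have := List.mem_takeWhile_imp hv2
    simp at this
  · have hvr : v ∈ w.reverse := List.mem_reverse.mpr hv
    have hdp : w.reverse.dropWhile (fun a => decide (a ≠ v)) ≠ [] := by
      intro hemp
      have h := List.takeWhile_append_dropWhile (p := fun a => decide (a ≠ v)) (l := w.reverse)
      rw [hemp, List.append_nil] at h
      have hv2 : v ∈ w.reverse.takeWhile (fun a => decide (a ≠ v)) := by rw [h]; exact hvr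
      have := List.mem_takeWhile_imp hv2
      simp at this
    rw [List.getLast?_reverse]
    have h1 := List.head_dropWhile_not (fun a => decide (a ≠ v)) (l := w.reverse) hdp
    have h2 : (w.reverse.dropWhile (fun a => decide (a ≠ v))).head hdp = v := by
      simpa using h1
    rw [List.head?_eq_head hdp, h2]
  · intro x hx
    rw [List.mem_reverse] at hx
    have := List.mem_takeWhile_imp hx
    simpa using this

open Classical in
lemma key_ineq {V : Type*} [Fintype V] [DecidableEq V]
    {α : ℝ} (hα0 : 0 < α) (hα1 : α < 1)
    (out out' : V → Finset V) (v t : V)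
    (hrem : ∀ w, out' w = out w ∨ out' w = (out w).erase v) :
    α * ∑' w : List V,
        (if w.head? = some v ∧ w.getLast? = some t then stepP out α w else 0)
      ≤ ∑' w : List V,
        (if w.head? = some v ∧ w.getLast? = some t then stepP out' α w else 0) := by
  classical
  have h1 : (0:ℝ) ≤ 1 - α := by linarith
  -- the five weight functions
  set fH : List V → ℝ := fun w =>
    if w.head? = some v ∧ w.getLast? = some t then stepP out α w else 0 with hfH
  set fH' : List V → ℝ := fun w =>
    if w.head? = some v ∧ w.getLast? = some t then stepP out' α w else 0 with hfH'
  set g : List V → ℝ := fun p =>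
    if p.head? = some v ∧ p.getLast? = some v then stepP out α p else 0 with hg
  set h : List V → ℝ := fun q =>
    if q.head? = some v ∧ q.getLast? = some t ∧ v ∉ q.tail then stepP out α q else 0 with hh
  set h' : List V → ℝ := fun q =>
    if q.head? = some v ∧ q.getLast? = some t ∧ v ∉ q.tail then stepP out' α q else 0 with hh'
  -- nonnegativity
  have hfH0 : ∀ w, 0 ≤ fH w := by
    intro w; rw [hfH]; dsimp only; split
    · exact stepP_nonneg out hα1.le w
    · exact le_refl 0
  have hfH'0 : ∀ w, 0 ≤ fH' w := by
    intro w; rw [hfH']; dsimp only; split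
    · exact stepP_nonneg out' hα1.le w
    · exact le_refl 0
  have hg0 : ∀ p, 0 ≤ g p := by
    intro p; rw [hg]; dsimp only; split
    · exact stepP_nonneg out hα1.le p
    · exact le_refl 0
  have hh0 : ∀ q, 0 ≤ h q := by
    intro q; rw [hh]; dsimp only; split
    · exact stepP_nonneg out hα1.le q
    · exact le_refl 0
  have hh'0 : ∀ q, 0 ≤ h' q := by
    intro q; rw [hh']; dsimp only; split
    · exact stepP_nonneg out' hα1.le q
    · exact le_refl 0
  -- summability
  have hdom : ∀ (oo : V → Finset V) (c : List V → Prop) (_ : DecidablePred c),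
      (∀ l, c l → l.head? = some v) → ∀ l,
      (if c l then stepP oo α l else 0) ≤ (if l.head? = some v then stepP oo α l else 0) := by
    intro oo c _ hc l
    split_ifs with h1' h2'
    · exact le_refl _
    · exact absurd (hc l h1') h2'
    · exact stepP_nonneg oo hα1.le l
    · exact le_refl _
  obtain ⟨hfHS, -⟩ := walk_summable out hα0 hα1 v fH hfH0
    (hdom out (fun w => w.head? = some v ∧ w.getLast? = some t) inferInstance
      (fun l hl => hl.1))
  obtain ⟨hfH'S, -⟩ := walk_summable out' hα0 hα1 v fH' hfH'0
    (hdom out' (fun w => w.head? = some v ∧ w.getLast? = some t) inferInstance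
      (fun l hl => hl.1))
  obtain ⟨hgS, hgB⟩ := walk_summable out hα0 hα1 v g hg0
    (hdom out (fun p => p.head? = some v ∧ p.getLast? = some v) inferInstance
      (fun l hl => hl.1))
  obtain ⟨hhS, -⟩ := walk_summable out hα0 hα1 v h hh0
    (hdom out (fun q => q.head? = some v ∧ q.getLast? = some t ∧ v ∉ q.tail) inferInstance
      (fun l hl => hl.1))
  obtain ⟨hh'S, -⟩ := walk_summable out' hα0 hα1 v h' hh'0
    (hdom out' (fun q => q.head? = some v ∧ q.getLast? = some t ∧ v ∉ q.tail) inferInstance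
      (fun l hl => hl.1))
  -- the product function
  have hF0 : (0 : List V × List V → ℝ) ≤ fun z => g z.1 * h z.2 :=
    fun z => mul_nonneg (hg0 _) (hh0 _)
  have hFS : Summable (fun z : List V × List V => g z.1 * h z.2) := by
    rw [summable_prod_of_nonneg hF0]
    refine ⟨fun p => (hhS.mul_left (g p)), ?_⟩
    simpa only [tsum_mul_left] using hgS.mul_right (∑' q, h q)
  -- the decomposition step
  have hpoint : ∀ w, fH w ≤ (fun z : List V × List V => g z.1 * h z.2) (splitv v w) := by
    intro w
    by_cases hc : w.head? = some v ∧ w.getLast? = some t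
    · have hvw : v ∈ w := List.mem_of_mem_head? (by rw [hc.1]; rfl)
      obtain ⟨p, q, hsp, hw, hpne, hplast, hqav⟩ := splitv_of_mem v hvw
      rw [hsp]
      dsimp only
      have hphead : p.head? = some v := by
        have := hc.1
        rw [hw, List.head?_append_of_ne_nil _ hpne] at this
        exact this
      have hqlast : (v :: q).getLast? = some t := by
        cases q with
        | nil =>
          have h2 := hc.2
          rw [hw, List.append_nil] at h2
          rw [hplast] at h2
          simpa using h2
        | cons x xs =>
          rw [List.getLast?_cons_cons]
          have h2 := hc.2
          rw [hw, List.getLast?_append_of_ne_nil _ (List.cons_ne_nil x xs)] at h2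
          exact h2
      have hqav' : v ∉ (v :: q).tail := by
        intro hm
        exact hqav v hm rfl
      have hsplit : stepP out α w = stepP out α p * stepP out α (v :: q) := by
        rw [hw]
        exact stepP_split out v q hplast
      rw [hfH, hg, hh]
      dsimp only
      rw [if_pos hc, if_pos ⟨hphead, hplast⟩, if_pos ⟨rfl, hqlast, hqav'⟩]
      exact le_of_eq hsplit
    · have : fH w = 0 := by rw [hfH]; dsimp only; rw [if_neg hc]
      rw [this]
      exact hF0 (splitv v w)
  have hstep1 : ∑' w, fH w ≤ ∑' z : List V × List V, g z.1 * h z.2 :=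
    Summable.tsum_le_tsum_of_inj (splitv v) (splitv_injective v)
      (fun z _ => hF0 z) hpoint hfHS hFS
  have hstep2 : ∑' z : List V × List V, g z.1 * h z.2 = (∑' p, g p) * (∑' q, h q) :=
    (Summable.tsum_mul_tsum hgS hhS hFS).symm
  -- monotonicity steps
  have hpt2 : ∀ q, h q ≤ h' q := by
    intro q
    rw [hh, hh']
    dsimp only
    by_cases hc : q.head? = some v ∧ q.getLast? = some t ∧ v ∉ q.tail
    · rw [if_pos hc, if_pos hc]
      exact stepP_mono out out' v hα1.le hrem q hc.2.2
    · rw [if_neg hc, if_neg hc]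
  have hpt3 : ∀ q, h' q ≤ fH' q := by
    intro q
    rw [hh', hfH']
    dsimp only
    split_ifs with h1' h2'
    · exact le_refl _
    · exact absurd ⟨h1'.1, h1'.2.1⟩ h2'
    · exact stepP_nonneg out' hα1.le q
    · exact le_refl _
  -- putting it together
  calc α * ∑' w, fH w
      ≤ α * ((∑' p, g p) * (∑' q, h q)) := by
        apply mul_le_mul_of_nonneg_left _ hα0.le
        rw [← hstep2]
        exact hstep1
    _ ≤ α * (α⁻¹ * (∑' q, h q)) := by
        apply mul_le_mul_of_nonneg_left _ hα0.le
        exact mul_le_mul_of_nonneg_right hgB (tsum_nonneg hh0)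
    _ = ∑' q, h q := by
        rw [← mul_assoc, mul_inv_cancel₀ hα0.ne', one_mul]
    _ ≤ ∑' q, h' q := Summable.tsum_le_tsum hpt2 hhS hh'S
    _ ≤ ∑' w, fH' w := Summable.tsum_le_tsum hpt3 hh'S hfH'S

end Aux

/-- Removing some subset of the in-edges of v from a graph H (giving H') decreases
π(v,t) by at most a factor α: π_{H'}(v,t) ≥ α·π_H(v,t).  This also holds when v = t. -/
theorem stmt_10 {V : Type*} [Fintype V] [DecidableEq V]
    (α : ℝ) (hα0 : 0 < α) (hα1 : α < 1)
    (out out' : V → Finset V) (v t : V)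
    (hrem : ∀ w, out' w = out w ∨ out' w = (out w).erase v) :
    α * ppr out α v t ≤ ppr out' α v t := by
  unfold ppr
  exact mul_le_mul_of_nonneg_left (key_ineq hα0 hα1 out out' v t hrem) hα0.le
end

section
/- Suppose the pushback invariant holds with the additional guarantee that at the end of the previous round every vertex had residue r'(v) < 2·r_push, and p only increases over time. Then at every moment in the current round, every vertex v satisfies π(v,t) − p(v) < 2·r_push, and consequently r(v) < 2·r_push/α. -/
open Finset

/-- If at the end of the previous round the invariant π(v,t) = p'(v) + ∑_w π(v,w) r'(w)
held with all residues r'(w) < 2 r_push, and p only increases (p' ≤ p), then at every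
moment of the current round every vertex satisfies π(v,t) - p(v) < 2 r_push and hence
r(v) < 2 r_push / α, using π(v,t) ≥ p(v) + π(v,v) r(v) and π(v,v) ≥ α. -/
theorem stmt_15 {V : Type*} [Fintype V]
    (α : ℝ) (hα0 : 0 < α) (hα1 : α < 1)
    (π : V → V → ℝ) (t : V) (p p' r r' : V → ℝ) (rpush : ℝ) (hrpush : 0 < rpush)
    (hπ0 : ∀ s v, 0 ≤ π s v) (hπ1 : ∀ s, ∑ v, π s v = 1)
    (hπdiag : ∀ v, α ≤ π v v)
    (hr0 : ∀ v, 0 ≤ r v)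
    (hprev : ∀ v, π v t = p' v + ∑ w, π v w * r' w)
    (hr' : ∀ w, r' w < 2 * rpush)
    (hmono : ∀ v, p' v ≤ p v)
    (hlow : ∀ v, p v + π v v * r v ≤ π v t) :
    ∀ v, π v t - p v < 2 * rpush ∧ r v < 2 * rpush / α := by
  intro v
  have hstrict : ∑ w, π v w * r' w < 2 * rpush := by
    have h1 : ∑ w, π v w * r' w < ∑ w, π v w * (2 * rpush) := by
      apply Finset.sum_lt_sum
      · intro w _; exact mul_le_mul_of_nonneg_left (hr' w).le (hπ0 v w)
      · exact ⟨v, Finset.mem_univ v,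
          mul_lt_mul_of_pos_left (hr' v) (lt_of_lt_of_le hα0 (hπdiag v))⟩
    calc ∑ w, π v w * r' w < ∑ w, π v w * (2 * rpush) := h1
      _ = 2 * rpush := by rw [← Finset.sum_mul, hπ1 v, one_mul]
  have h2 : π v t - p v < 2 * rpush := by
    have := hprev v
    have := hmono v
    linarith
  refine ⟨h2, ?_⟩
  have h3 : α * r v ≤ π v v * r v :=
    mul_le_mul_of_nonneg_right (hπdiag v) (hr0 v)
  have h4 : π v v * r v < 2 * rpush := by
    have := hlow v; linarith
  rw [lt_div_iff₀ hα0]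
  nlinarith
end

section
/- Let α ∈ (0,1) and c ∈ (0,1), and suppose every vertex of a directed graph on n vertices has in-degree and out-degree at least (1-c)n, with the target t having at least (1-c)n in-neighbors. Then the PageRank centrality satisfies (α/n)·∑_{i=0}^∞ (1-α)^i (1-c)^{2i+1} ≤ π(t) and π(t) ≤ (α/n)·∑_{i=0}^∞ (1-α)^i / (1-c)^{i+1}, provided (1-α)/(1-c) < 1 so that the upper series converges. In particular, π(t) ∈ [ α(1-c)/(n(1-(1-α)(1-c)²)), α/(n(1-c)(1-(1-α)/(1-c))) ]. -/
open Finset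

set_option maxHeartbeats 1000000 in
/-- In a graph on n vertices where every vertex has in- and out-degree at least (1-c)n
(and the target t has at least (1-c)n in-neighbors), the PageRank centrality
π(t) = (1/n)∑_v π(v,t) is bounded between the two geometric series
(α/n)·∑_i (1-α)^i (1-c)^{2i+1} and (α/n)·∑_i (1-α)^i/(1-c)^{i+1} (the latter converging
when (1-α)/(1-c) < 1); in particular
π(t) ∈ [α(1-c)/(n(1-(1-α)(1-c)²)), α/(n(1-c)(1-(1-α)/(1-c)))]. -/
theorem stmt_16 {V : Type*} [Fintype V] [DecidableEq V] [Nonempty V]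
    (α c : ℝ) (hα0 : 0 < α) (hα1 : α < 1) (hc0 : 0 < c) (hc1 : c < 1)
    (out : V → Finset V) (π : V → V → ℝ) (t : V)
    (n : ℕ) (hn : n = Fintype.card V)
    (houtdeg : ∀ v, (1 - c) * n ≤ ((out v).card : ℝ))
    (hindeg : ∀ v, (1 - c) * n ≤ ((univ.filter (fun w => v ∈ out w)).card : ℝ))
    (hnonneg : ∀ s v, 0 ≤ π s v)
    (hrec : ∀ s v, (out s).Nonempty →
      π s v = (if s = v then α else 0) + (1 - α) * (∑ w ∈ out s, π w v) / (out s).card)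
    (hconv : (1 - α) / (1 - c) < 1) :
    (α / n) * (∑' i : ℕ, (1 - α) ^ i * (1 - c) ^ (2 * i + 1)) ≤ (∑ v, π v t) / n ∧
    (∑ v, π v t) / n ≤ (α / n) * (∑' i : ℕ, (1 - α) ^ i / (1 - c) ^ (i + 1)) ∧
    α * (1 - c) / (n * (1 - (1 - α) * (1 - c) ^ 2)) ≤ (∑ v, π v t) / n ∧
    (∑ v, π v t) / n ≤ α / (n * (1 - c) * (1 - (1 - α) / (1 - c))) := by
  have h1c : (0:ℝ) < 1 - c := by linarith
  have h1a : (0:ℝ) < 1 - α := by linarith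
  have hnpos : 0 < n := hn ▸ Fintype.card_pos
  have hnR : (0:ℝ) < n := by exact_mod_cast hnpos
  have hcα : c < α := by
    have := (div_lt_one h1c).mp hconv
    linarith
  have hcardpos : ∀ s, (0:ℝ) < ((out s).card : ℝ) := fun s =>
    lt_of_lt_of_le (by positivity) (houtdeg s)
  have hne : ∀ s, (out s).Nonempty := by
    intro s
    rw [← Finset.card_pos]
    exact_mod_cast hcardpos s
  have hcardle : ∀ s, ((out s).card : ℝ) ≤ n := by
    intro s
    have : (out s).card ≤ Fintype.card V := Finset.card_le_univ _
    rw [hn]; exact_mod_cast this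
  have hindegle : ∀ v, ((univ.filter (fun w => v ∈ out w)).card : ℝ) ≤ n := by
    intro v
    have : (univ.filter (fun w => v ∈ out w)).card ≤ Fintype.card V := Finset.card_le_univ _
    rw [hn]; exact_mod_cast this
  set S := ∑ v, π v t with hSdef
  have hSnonneg : 0 ≤ S := Finset.sum_nonneg fun v _ => hnonneg v t
  set T : ℝ := ∑ s, (∑ w ∈ out s, π w t) / (out s).card with hTdef
  have hSeq : S = α + (1 - α) * T := by
    have h0 : S = ∑ s, ((if s = t then α else 0) + (1 - α) * (∑ w ∈ out s, π w t) / (out s).card) :=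
      Finset.sum_congr rfl fun s _ => hrec s t (hne s)
    rw [h0, Finset.sum_add_distrib, Finset.sum_ite_eq' univ t (fun _ => α),
      if_pos (Finset.mem_univ t), hTdef, Finset.mul_sum]
    congr 1
    exact Finset.sum_congr rfl fun s _ => by ring
  have hswap : T = ∑ w, (∑ s ∈ univ.filter (fun s => w ∈ out s), (1:ℝ)/(out s).card) * π w t := by
    rw [hTdef]
    have h1 : ∀ s : V, (∑ w ∈ out s, π w t) / ((out s).card : ℝ)
        = ∑ w : V, (if w ∈ out s then π w t / (out s).card else 0) := by
      intro s
      rw [Finset.sum_ite_mem, Finset.univ_inter, Finset.sum_div]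
    simp_rw [h1]
    rw [Finset.sum_comm]
    refine Finset.sum_congr rfl fun w _ => ?_
    rw [Finset.sum_filter, Finset.sum_mul]
    refine Finset.sum_congr rfl fun s _ => ?_
    by_cases h : w ∈ out s <;> simp [h] <;> ring
  have hcoef_lb : ∀ w : V, (1 - c) ≤ ∑ s ∈ univ.filter (fun s => w ∈ out s), (1:ℝ)/(out s).card := by
    intro w
    have h1 : ∀ s ∈ univ.filter (fun s => w ∈ out s), (1:ℝ)/n ≤ 1/(out s).card := by
      intro s _
      exact one_div_le_one_div_of_le (hcardpos s) (hcardle s)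
    calc (1 - c) ≤ ((univ.filter (fun s => w ∈ out s)).card : ℝ) / n := by
          rw [le_div_iff₀ hnR]; exact hindeg w
      _ = (univ.filter (fun s => w ∈ out s)).card • ((1:ℝ)/n) := by
          rw [nsmul_eq_mul]; ring
      _ ≤ ∑ s ∈ univ.filter (fun s => w ∈ out s), (1:ℝ)/(out s).card :=
          Finset.card_nsmul_le_sum _ _ _ h1
  have hcoef_ub : ∀ w : V,
      (∑ s ∈ univ.filter (fun s => w ∈ out s), (1:ℝ)/(out s).card) ≤ 1/(1-c) := by
    intro w
    have h1 : ∀ s ∈ univ.filter (fun s => w ∈ out s), (1:ℝ)/(out s).card ≤ 1/((1-c)*n) := by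
      intro s _
      exact one_div_le_one_div_of_le (by positivity) (houtdeg s)
    calc (∑ s ∈ univ.filter (fun s => w ∈ out s), (1:ℝ)/(out s).card)
        ≤ (univ.filter (fun s => w ∈ out s)).card • ((1:ℝ)/((1-c)*n)) :=
          Finset.sum_le_card_nsmul _ _ _ h1
      _ = ((univ.filter (fun s => w ∈ out s)).card : ℝ) / ((1-c)*n) := by
          rw [nsmul_eq_mul]; ring
      _ ≤ n / ((1-c)*n) := by gcongr; exact_mod_cast hindegle w
      _ = 1/(1-c) := by rw [mul_comm]; field_simp
  have hT_lb : (1 - c) * S ≤ T := by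
    rw [hswap, hSdef, Finset.mul_sum]
    exact Finset.sum_le_sum fun w _ =>
      mul_le_mul_of_nonneg_right (hcoef_lb w) (hnonneg w t)
  have hT_ub : T * (1 - c) ≤ S := by
    have h2 : T ≤ S / (1 - c) := by
      rw [hswap, hSdef, Finset.sum_div]
      refine Finset.sum_le_sum fun w _ => ?_
      calc (∑ s ∈ univ.filter (fun s => w ∈ out s), (1:ℝ)/(out s).card) * π w t
          ≤ (1/(1-c)) * π w t := mul_le_mul_of_nonneg_right (hcoef_ub w) (hnonneg w t)
        _ = π w t / (1-c) := by ring
    exact (le_div_iff₀ h1c).mp h2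
  -- core scalar bounds on S
  have hS_lb : α ≤ S * (1 - (1-α)*(1-c)) := by
    nlinarith [mul_le_mul_of_nonneg_left hT_lb h1a.le]
  have hS_ub : S * (α - c) ≤ α * (1 - c) := by
    nlinarith [mul_le_mul_of_nonneg_left hT_ub h1a.le]
  have hαc : (0:ℝ) < α - c := by linarith
  have hD2 : (0:ℝ) < 1 - (1-α)*(1-c)^2 := by nlinarith
  -- the key clean bounds
  have key_lb : α * (1 - c) ≤ S * (1 - (1-α)*(1-c)^2) := by
    nlinarith [mul_nonneg hSnonneg (mul_nonneg (mul_nonneg h1a.le h1c.le) hc0.le)]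
  have key_ub : S * (α - c) ≤ α := by nlinarith
  -- tsum evaluations
  have htsum1 : (∑' i : ℕ, (1 - α) ^ i * (1 - c) ^ (2 * i + 1))
      = (1 - c) / (1 - (1-α)*(1-c)^2) := by
    have e : ∀ i : ℕ, (1 - α) ^ i * (1 - c) ^ (2 * i + 1)
        = (1 - c) * ((1-α)*(1-c)^2)^i := by
      intro i
      rw [pow_succ, pow_mul, mul_pow]
      ring
    rw [tsum_congr e, tsum_mul_left,
      tsum_geometric_of_lt_one (by positivity) (by nlinarith), div_eq_mul_inv]
  have hr0 : (0:ℝ) ≤ (1-α)/(1-c) := by positivity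
  have htsum2 : (∑' i : ℕ, (1 - α) ^ i / (1 - c) ^ (i + 1)) = 1 / (α - c) := by
    have e : ∀ i : ℕ, (1 - α) ^ i / (1 - c) ^ (i + 1)
        = (1/(1-c)) * ((1-α)/(1-c))^i := by
      intro i
      rw [div_pow, pow_succ]
      field_simp
    rw [tsum_congr e, tsum_mul_left, tsum_geometric_of_lt_one hr0 hconv]
    have h3 : 1 - (1-α)/(1-c) = (α-c)/(1-c) := by field_simp; ring
    rw [h3]
    rw [inv_div, eq_div_iff (ne_of_gt hαc)]
    field_simp
  refine ⟨?_, ?_, ?_, ?_⟩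
  · rw [htsum1, div_mul_div_comm, div_le_div_iff₀ (by positivity) hnR]
    nlinarith [mul_le_mul_of_nonneg_right key_lb hnR.le]
  · rw [htsum2, div_mul_div_comm, mul_one, div_le_div_iff₀ hnR (by positivity)]
    nlinarith [mul_le_mul_of_nonneg_right key_ub hnR.le]
  · rw [div_le_div_iff₀ (by positivity) hnR]
    nlinarith [mul_le_mul_of_nonneg_right key_lb hnR.le]
  · have hden : n * (1 - c) * (1 - (1 - α) / (1 - c)) = n * (α - c) := by
      field_simp
      ring
    rw [hden, div_le_div_iff₀ hnR (by positivity)]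
    nlinarith [mul_le_mul_of_nonneg_right key_ub hnR.le]
end
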